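/- arXiv:2508.18185 — 7 statements merged into one kernel-verified Lean document; each statement's English description precedes it below -/
import Mathlib

section
/- Let k be even, k/2 ≤ ℓ ≤ n/2, and let I = (H, (b_v)_{v∈H}) be a k-LIN(𝔽) instance in n variables with H nonempty, with level-ℓ Kikuchi matrix A. For x ∈ 𝔽ⁿ define y ∈ ℂ^N by y_U = χ_U(x) for each ℓ-sparse U ∈ 𝔽ⁿ. Then y†Ay = Δ · ∑_{v∈H} ∑_{β∈𝔽*} ω_p^{Tr(β·b_v)} · conj(χ_{βv}(x)), where y†Ay = ∑_{U,V} conj(y_U)·A(U,V)·y_V and Δ = C(k, k/2) · C(n−k, ℓ−k/2) · |𝔽*|^(ℓ−k/2). Equivalently, Φ(x) = (1/(|H|·|𝔽|·Δ)) · y†Ay, where Φ(x) = (1/(|H|·|𝔽|)) ∑_{v∈H} ∑_{β∈𝔽*} ω_p^{Tr(β·b_v)} · conj(χ_{βv}(x)). -/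
open Finset

/-- `ω_p^{Tr(a)}`: the additive character of a finite field `F` of characteristic `p`. -/
noncomputable def omegaTr (p : ℕ) (F : Type) [Field F] [Fintype F] [Algebra (ZMod p) F]
    (a : F) : ℂ :=
  Complex.exp (2 * Real.pi * Complex.I * ((Algebra.trace (ZMod p) F a).val : ℂ) / (p : ℂ))

/-- `χ_w(x) = ω_p^{Tr(⟨w,x⟩)}`. -/
noncomputable def chiF (p : ℕ) (F : Type) [Field F] [Fintype F] [Algebra (ZMod p) F] {n : ℕ}
    (w x : Fin n → F) : ℂ :=
  omegaTr p F (∑ i, w i * x i)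

/-- The support of a vector, as a `Finset`. -/
def fsupp {F : Type} [Zero F] [DecidableEq F] {n : ℕ} (v : Fin n → F) : Finset (Fin n) :=
  Finset.univ.filter fun i => v i ≠ 0

/-- The entry of the even-arity level-ℓ Kikuchi matrix of a `k`-LIN(𝔽) instance at `(U, V)`. -/
noncomputable def kikA (p : ℕ) (F : Type) [Field F] [Fintype F] [DecidableEq F]
    [Algebra (ZMod p) F] {n : ℕ} (H : Finset (Fin n → F)) (b : (Fin n → F) → F)
    (U V : Fin n → F) : ℂ :=
  ∑ v ∈ H, ∑ β ∈ Finset.univ.filter (fun β : F => β ≠ 0),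
    omegaTr p F (β * b v) *
      (if U - V = β • v ∧ symmDiff (fsupp U) (fsupp V) = fsupp v then 1 else 0)

lemma omegaTr_add (p : ℕ) [Fact p.Prime] (F : Type) [Field F] [Fintype F] [Algebra (ZMod p) F]
    (a b : F) : omegaTr p F (a + b) = omegaTr p F a * omegaTr p F b := by
  have : NeZero p := ⟨(Fact.out : p.Prime).ne_zero⟩
  unfold omegaTr
  rw [map_add, ← Complex.exp_add, Complex.exp_eq_exp_iff_exists_int]
  set X := Algebra.trace (ZMod p) F a with hX
  set Y := Algebra.trace (ZMod p) F b with hY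
  refine ⟨-(((X.val + Y.val) / p : ℕ) : ℤ), ?_⟩
  have hp : (p : ℂ) ≠ 0 := Nat.cast_ne_zero.2 (Fact.out : p.Prime).ne_zero
  have hval : (X.val : ℂ) + (Y.val : ℂ) = ((X + Y).val : ℂ) + (p : ℂ) * (((X.val + Y.val) / p : ℕ) : ℂ) := by
    have h : X.val + Y.val = (X + Y).val + p * ((X.val + Y.val) / p) := by
      rw [ZMod.val_add]; exact (Nat.mod_add_div _ _).symm
    exact_mod_cast congrArg (Nat.cast : ℕ → ℂ) h
  rw [Int.cast_neg, Int.cast_natCast, ← add_div, div_add' _ _ _ hp,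
    div_eq_div_iff hp hp]
  linear_combination (-(2 : ℂ) * Real.pi * Complex.I * (p : ℂ)) * hval

lemma omegaTr_zero (p : ℕ) [Fact p.Prime] (F : Type) [Field F] [Fintype F] [Algebra (ZMod p) F] :
    omegaTr p F 0 = 1 := by
  unfold omegaTr
  simp

lemma omegaTr_ne_zero (p : ℕ) (F : Type) [Field F] [Fintype F] [Algebra (ZMod p) F] (a : F) :
    omegaTr p F a ≠ 0 := Complex.exp_ne_zero _

lemma omegaTr_conj (p : ℕ) [Fact p.Prime] (F : Type) [Field F] [Fintype F] [Algebra (ZMod p) F]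
    (a : F) : (starRingEnd ℂ) (omegaTr p F a) = omegaTr p F (-a) := by
  have h1 : omegaTr p F a * omegaTr p F (-a) = 1 := by
    rw [← omegaTr_add]; simp [omegaTr_zero]
  have h2 : (starRingEnd ℂ) (omegaTr p F a) * omegaTr p F a = 1 := by
    unfold omegaTr
    rw [← Complex.exp_conj, ← Complex.exp_add]
    have h : (starRingEnd ℂ) (2 * ↑Real.pi * Complex.I * ((Algebra.trace (ZMod p) F a).val : ℂ) / (p : ℂ))
        = -(2 * ↑Real.pi * Complex.I * ((Algebra.trace (ZMod p) F a).val : ℂ) / (p : ℂ)) := by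
      simp only [map_div₀, map_mul, Complex.conj_I, Complex.conj_ofReal, map_ofNat, map_natCast]
      ring
    rw [h, neg_add_cancel, Complex.exp_zero]
  calc (starRingEnd ℂ) (omegaTr p F a)
      = (starRingEnd ℂ) (omegaTr p F a) * (omegaTr p F a * omegaTr p F (-a)) := by rw [h1, mul_one]
    _ = ((starRingEnd ℂ) (omegaTr p F a) * omegaTr p F a) * omegaTr p F (-a) := by ring
    _ = omegaTr p F (-a) := by rw [h2, one_mul]

lemma mem_fsupp {F : Type} [Zero F] [DecidableEq F] {n : ℕ} {v : Fin n → F} {i : Fin n} :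
    i ∈ fsupp v ↔ v i ≠ 0 := by simp [fsupp]
/-- Number of vectors with support exactly `T`. -/
lemma card_support_eq {F : Type} [Field F] [Fintype F] [DecidableEq F] {n : ℕ}
    (T : Finset (Fin n)) :
    (Finset.univ.filter fun g : Fin n → F => fsupp g = T).card
      = (Fintype.card F - 1) ^ T.card := by
  have hcard : (Finset.univ.filter fun β : F => β ≠ 0).card = Fintype.card F - 1 := by
    rw [Finset.filter_ne' Finset.univ 0, Finset.card_erase_of_mem (Finset.mem_univ 0),
      Finset.card_univ]
  rw [← hcard, ← Finset.prod_const, ← Finset.card_pi]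
  apply Finset.card_nbij' (fun g i _ => g i)
    (fun f i => if h : i ∈ T then f i h else 0)
  · intro g hg
    simp only [Finset.mem_coe, Finset.mem_filter, Finset.mem_univ, true_and] at hg
    simp only [Finset.mem_coe, Finset.mem_pi]
    intro i hi
    simp only [Finset.mem_filter, Finset.mem_univ, true_and]
    rw [← hg] at hi
    exact mem_fsupp.1 hi
  · intro f hf
    simp only [Finset.mem_coe, Finset.mem_pi] at hf
    simp only [Finset.mem_coe, Finset.mem_filter, Finset.mem_univ, true_and]
    ext i
    rw [mem_fsupp]
    by_cases h : i ∈ T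
    · simp only [h, dif_pos, iff_true]
      have := hf i h
      simp only [Finset.mem_filter, Finset.mem_univ, true_and] at this
      exact this
    · simp [h]
  · intro g hg
    simp only [Finset.mem_coe, Finset.mem_filter, Finset.mem_univ, true_and] at hg
    funext i
    by_cases h : i ∈ T
    · simp [h]
    · simp only [h, dif_neg, not_false_iff]
      rw [← hg] at h
      by_contra hne
      exact h (mem_fsupp.2 (Ne.symm (by simpa using hne)))
  · intro f hf
    funext i
    funext hi
    simp [hi]

lemma card_support_subset {F : Type} [Field F] [Fintype F] [DecidableEq F] {n : ℕ}
    (A : Finset (Fin n)) (m : ℕ) :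
    (Finset.univ.filter fun g : Fin n → F => fsupp g ⊆ A ∧ (fsupp g).card = m).card
      = A.card.choose m * (Fintype.card F - 1) ^ m := by
  rw [Finset.card_eq_sum_card_fiberwise
    (f := fsupp) (t := A.powersetCard m)
    (fun g hg => by
      simp only [Finset.mem_coe, Finset.mem_filter] at hg ⊢
      rw [Finset.mem_powersetCard]
      exact ⟨hg.2.1, hg.2.2⟩)]
  have : ∀ T ∈ A.powersetCard m,
      ((Finset.univ.filter fun g : Fin n → F => fsupp g ⊆ A ∧ (fsupp g).card = m).filter
        fun g => fsupp g = T).card = (Fintype.card F - 1) ^ m := by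
    intro T hT
    rw [Finset.mem_powersetCard] at hT
    have : ((Finset.univ.filter fun g : Fin n → F => fsupp g ⊆ A ∧ (fsupp g).card = m).filter
        fun g => fsupp g = T) = Finset.univ.filter fun g : Fin n → F => fsupp g = T := by
      ext g
      simp only [Finset.mem_filter, Finset.mem_univ, true_and]
      constructor
      · rintro ⟨_, h⟩; exact h
      · rintro h; exact ⟨⟨h ▸ hT.1, h ▸ hT.2⟩, h⟩
    rw [this, card_support_eq, hT.2]
  rw [Finset.sum_congr rfl this, Finset.sum_const, Finset.card_powersetCard, smul_eq_mul]

lemma count_pairs {F : Type} [Field F] [Fintype F] [DecidableEq F] {n k ℓ : ℕ}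
    (hke : Even k) (hkl : k ≤ 2 * ℓ) (hln : 2 * ℓ ≤ n)
    (v : Fin n → F) (hv : (fsupp v).card = k) (β : F) (hβ : β ≠ 0) :
    ((((Finset.univ.filter fun U : Fin n → F => (fsupp U).card = ℓ)) ×ˢ
      ((Finset.univ.filter fun V : Fin n → F => (fsupp V).card = ℓ))).filter
        fun UV => UV.1 - UV.2 = β • v ∧ symmDiff (fsupp UV.1) (fsupp UV.2) = fsupp v).card
      = k.choose (k / 2) * ((n - k).choose (ℓ - k / 2) * (Fintype.card F - 1) ^ (ℓ - k / 2)) := by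
  obtain ⟨r, hr⟩ := hke
  have hk2 : k / 2 = r := by omega
  set W := fsupp v with hW
  -- the parameter set
  set P := (W.powersetCard (k / 2)) ×ˢ
    (Finset.univ.filter fun g : Fin n → F => fsupp g ⊆ Wᶜ ∧ (fsupp g).card = ℓ - k / 2)
    with hP
  have hPcard : P.card
      = k.choose (k / 2) * ((n - k).choose (ℓ - k / 2) * (Fintype.card F - 1) ^ (ℓ - k / 2)) := by
    rw [hP, Finset.card_product, Finset.card_powersetCard, hv, card_support_subset,
      Finset.card_compl, hv, Fintype.card_fin]
  rw [← hPcard]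
  symm
  -- the map from parameters to V
  set Vof : Finset (Fin n) → (Fin n → F) → (Fin n → F) :=
    fun S g i => if i ∈ S then -(β * v i) else g i with hVof
  -- generic facts about Vof
  have hval : ∀ S g, S ⊆ W → (∀ i ∈ W, g i = 0) →
      (Vof S g + β • v = fun i => if i ∈ W \ S then β * v i else g i) := by
    intro S g hSW hg0
    funext i
    simp only [Pi.add_apply, Pi.smul_apply, smul_eq_mul, hVof]
    by_cases hiS : i ∈ S
    · have hiW : i ∈ W := hSW hiS
      simp [hiS, Finset.mem_sdiff, hg0 i hiW]
    · by_cases hiW : i ∈ W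
      · simp [hiS, hiW, Finset.mem_sdiff, hg0 i hiW]
      · have hvi : v i = 0 := by
          by_contra h; exact hiW (mem_fsupp.2 h)
        simp [hiS, hiW, Finset.mem_sdiff, hvi]
  have hsuppV : ∀ S g, S ⊆ W → (∀ i ∈ W, g i = 0) →
      fsupp (Vof S g) = S ∪ fsupp g := by
    intro S g hSW hg0
    ext i
    rw [mem_fsupp, Finset.mem_union]
    by_cases hiS : i ∈ S
    · have hiW : i ∈ W := hSW hiS
      have hvi : v i ≠ 0 := mem_fsupp.1 hiW
      simp [hVof, hiS, hβ, hvi]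
    · simp [hVof, hiS, mem_fsupp]
  have hsuppU : ∀ S g, S ⊆ W → (∀ i ∈ W, g i = 0) →
      fsupp (Vof S g + β • v) = (W \ S) ∪ fsupp g := by
    intro S g hSW hg0
    rw [hval S g hSW hg0]
    ext i
    rw [mem_fsupp, Finset.mem_union]
    by_cases hiWS : i ∈ W \ S
    · have hvi : v i ≠ 0 := mem_fsupp.1 (Finset.mem_sdiff.1 hiWS).1
      simp [hiWS, hβ, hvi]
    · simp [hiWS, mem_fsupp]
  apply Finset.card_nbij' (i := fun Sg => (Vof Sg.1 Sg.2 + β • v, Vof Sg.1 Sg.2))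
    (j := fun UV => (fsupp UV.2 ∩ W, fun i => if i ∈ W then 0 else UV.2 i))
  -- i maps into the pair set
  · rintro ⟨S, g⟩ hSg
    simp only [hP, Finset.mem_coe, Finset.mem_product, Finset.mem_powersetCard, Finset.mem_filter,
      Finset.mem_univ, true_and] at hSg
    obtain ⟨⟨hSW, hScard⟩, hgsub, hgcard⟩ := hSg
    have hg0 : ∀ i ∈ W, g i = 0 := by
      intro i hiW
      by_contra h
      exact (Finset.mem_compl.1 (hgsub (mem_fsupp.2 h))) hiW
    have hdisjS : Disjoint S (fsupp g) := by
      refine Finset.disjoint_left.2 fun i hiS hig => ?_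
      exact (Finset.mem_compl.1 (hgsub hig)) (hSW hiS)
    have hdisjWS : Disjoint (W \ S) (fsupp g) := by
      refine Finset.disjoint_left.2 fun i hiWS hig => ?_
      exact (Finset.mem_compl.1 (hgsub hig)) (Finset.mem_sdiff.1 hiWS).1
    have hsV := hsuppV S g hSW hg0
    have hsU := hsuppU S g hSW hg0
    simp only [Finset.mem_coe, Finset.mem_filter, Finset.mem_product, Finset.mem_univ, true_and]
    refine ⟨⟨?_, ?_⟩, ?_, ?_⟩
    · rw [hsU, Finset.card_union_of_disjoint hdisjWS, Finset.card_sdiff_of_subset hSW, hv, hScard, hgcard]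
      omega
    · rw [hsV, Finset.card_union_of_disjoint hdisjS, hScard, hgcard]
      omega
    · funext i; simp
    · rw [hsU, hsV]
      ext i
      rw [Finset.mem_symmDiff]
      simp only [Finset.mem_union, Finset.mem_sdiff]
      constructor
      · rintro (⟨h1, h2⟩ | ⟨h1, h2⟩)
        · rcases h1 with ⟨hiW, _⟩ | hig
          · exact hiW
          · exact absurd (Or.inr hig) h2
        · rcases h1 with hiS | hig
          · exact hSW hiS
          · exact absurd (Or.inr hig) h2
      · intro hiW
        have hig : i ∉ fsupp g := fun h => (Finset.mem_compl.1 (hgsub h)) hiW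
        by_cases hiS : i ∈ S
        · exact Or.inr ⟨Or.inl hiS, by rintro (⟨_, h⟩ | h) <;> [exact h hiS; exact hig h]⟩
        · exact Or.inl ⟨Or.inl ⟨hiW, hiS⟩, by rintro (h | h) <;> [exact hiS h; exact hig h]⟩
  -- j maps into P
  · rintro ⟨U, V⟩ hUV
    simp only [Finset.mem_coe, Finset.mem_filter, Finset.mem_product, Finset.mem_univ, true_and] at hUV
    obtain ⟨⟨hUcard, hVcard⟩, hsub, hsymm⟩ := hUV
    -- basic consequences
    have hUeq : U = V + β • v := by
      funext i
      have := congrFun hsub i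
      simp only [Pi.sub_apply, Pi.smul_apply, smul_eq_mul, Pi.add_apply] at this ⊢
      linear_combination this
    have hVW : ∀ i ∈ W, V i ≠ 0 → V i = -(β * v i) := by
      intro i hiW hVi
      have hmem := hsymm ▸ hiW
      rw [Finset.mem_symmDiff] at hmem
      have hU0 : U i = 0 := by
        rcases hmem with ⟨_, h2⟩ | ⟨_, h2⟩
        · exact absurd (mem_fsupp.2 hVi) h2
        · by_contra h; exact h2 (mem_fsupp.2 h)
      have := congrFun hUeq i
      simp only [Pi.add_apply, Pi.smul_apply, smul_eq_mul, hU0] at this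
      linear_combination -this
    have hoffW : ∀ i, i ∉ W → U i = V i := by
      intro i hiW
      have hvi : v i = 0 := by by_contra h; exact hiW (mem_fsupp.2 h)
      have := congrFun hUeq i
      simp only [Pi.add_apply, Pi.smul_apply, smul_eq_mul, hvi, mul_zero, add_zero] at this
      exact this
    set S' := fsupp V ∩ W with hS'
    set g' : Fin n → F := fun i => if i ∈ W then 0 else V i with hg'
    have hsuppg' : fsupp g' = fsupp V \ W := by
      ext i
      rw [mem_fsupp, Finset.mem_sdiff, mem_fsupp, hg']
      by_cases h : i ∈ W <;> simp [h]
    have hdisj1 : Disjoint S' (fsupp V \ W) :=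
      Finset.disjoint_left.2 fun i hi hj => (Finset.mem_sdiff.1 hj).2 (Finset.mem_inter.1 hi).2
    have hdisj2 : Disjoint (W \ S') (fsupp V \ W) :=
      Finset.disjoint_left.2 fun i hi hj => (Finset.mem_sdiff.1 hj).2 (Finset.mem_sdiff.1 hi).1
    have hVdec : fsupp V = S' ∪ (fsupp V \ W) := by
      ext i
      simp only [hS', Finset.mem_union, Finset.mem_inter, Finset.mem_sdiff]
      tauto
    have hUdec : fsupp U = (W \ S') ∪ (fsupp V \ W) := by
      ext i
      simp only [Finset.mem_union, Finset.mem_sdiff, hS', Finset.mem_inter]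
      by_cases hiW : i ∈ W
      · have hmem := hsymm ▸ hiW
        rw [Finset.mem_symmDiff] at hmem
        constructor
        · intro hiU
          rcases hmem with ⟨_, h2⟩ | ⟨h1, h2⟩
          · exact Or.inl ⟨hiW, fun h => h2 h.1⟩
          · exact absurd hiU h2
        · rintro (⟨_, h⟩ | ⟨_, h⟩)
          · rcases hmem with ⟨h1, _⟩ | ⟨h1, h2⟩
            · exact h1
            · exact absurd ⟨h1, hiW⟩ h
          · exact absurd hiW h
      · have heq : U i = V i := hoffW i hiW
        constructor
        · intro hiU
          exact Or.inr ⟨by rw [mem_fsupp] at hiU ⊢; rwa [← heq], hiW⟩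
        · rintro (⟨h, _⟩ | ⟨h, _⟩)
          · exact absurd h hiW
          · rw [mem_fsupp] at h ⊢; rwa [heq]
    have hcV : ℓ = S'.card + (fsupp V \ W).card := by
      conv_lhs => rw [← hVcard, hVdec]
      rw [Finset.card_union_of_disjoint hdisj1]
    have hcU : ℓ = (W \ S').card + (fsupp V \ W).card := by
      conv_lhs => rw [← hUcard, hUdec]
      rw [Finset.card_union_of_disjoint hdisj2]
    have hS'W : S' ⊆ W := Finset.inter_subset_right
    have hWS'card : (W \ S').card = k - S'.card := by
      rw [Finset.card_sdiff_of_subset hS'W, hv]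
    have hS'le : S'.card ≤ k := hv ▸ Finset.card_le_card hS'W
    have hS'card : S'.card = k / 2 := by omega
    have htcard : (fsupp V \ W).card = ℓ - k / 2 := by omega
    simp only [hP, Finset.mem_coe, Finset.mem_product, Finset.mem_powersetCard, Finset.mem_filter,
      Finset.mem_univ, true_and]
    refine ⟨⟨hS'W, hS'card⟩, ?_, ?_⟩
    · rw [hsuppg']
      exact fun i hi => Finset.mem_compl.2 (Finset.mem_sdiff.1 hi).2
    · rw [hsuppg', htcard]
  -- left inverse
  · rintro ⟨S, g⟩ hSg
    simp only [hP, Finset.mem_coe, Finset.mem_product, Finset.mem_powersetCard, Finset.mem_filter,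
      Finset.mem_univ, true_and] at hSg
    obtain ⟨⟨hSW, hScard⟩, hgsub, hgcard⟩ := hSg
    have hg0 : ∀ i ∈ W, g i = 0 := by
      intro i hiW
      by_contra h
      exact (Finset.mem_compl.1 (hgsub (mem_fsupp.2 h))) hiW
    have hsV := hsuppV S g hSW hg0
    refine Prod.ext ?_ ?_
    · show fsupp (Vof S g) ∩ W = S
      rw [hsV]
      ext i
      simp only [Finset.mem_inter, Finset.mem_union]
      constructor
      · rintro ⟨hi1 | hi2, hiW⟩
        · exact hi1
        · exact absurd hiW (Finset.mem_compl.1 (hgsub hi2))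
      · intro hiS
        exact ⟨Or.inl hiS, hSW hiS⟩
    · show (fun i => if i ∈ W then 0 else Vof S g i) = g
      funext i
      by_cases hiW : i ∈ W
      · simp [hiW, (hg0 i hiW).symm]
      · have hiS : i ∉ S := fun h => hiW (hSW h)
        simp [hiW, hVof, hiS]
  -- right inverse
  · rintro ⟨U, V⟩ hUV
    simp only [Finset.mem_coe, Finset.mem_filter, Finset.mem_product, Finset.mem_univ, true_and] at hUV
    obtain ⟨⟨hUcard, hVcard⟩, hsub, hsymm⟩ := hUV
    have hUeq : U = V + β • v := by
      funext i
      have := congrFun hsub i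
      simp only [Pi.sub_apply, Pi.smul_apply, smul_eq_mul, Pi.add_apply] at this ⊢
      linear_combination this
    have hVW : ∀ i ∈ W, V i ≠ 0 → V i = -(β * v i) := by
      intro i hiW hVi
      have hmem := hsymm ▸ hiW
      rw [Finset.mem_symmDiff] at hmem
      have hU0 : U i = 0 := by
        rcases hmem with ⟨_, h2⟩ | ⟨_, h2⟩
        · exact absurd (mem_fsupp.2 hVi) h2
        · by_contra h; exact h2 (mem_fsupp.2 h)
      have := congrFun hUeq i
      simp only [Pi.add_apply, Pi.smul_apply, smul_eq_mul, hU0] at this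
      linear_combination -this
    have hVeq : Vof (fsupp V ∩ W) (fun i => if i ∈ W then 0 else V i) = V := by
      funext i
      simp only [hVof]
      by_cases hiS : i ∈ fsupp V ∩ W
      · obtain ⟨hiV, hiW⟩ := Finset.mem_inter.1 hiS
        simp only [hiS, if_pos]
        exact (hVW i hiW (mem_fsupp.1 hiV)).symm
      · simp only [hiS, if_neg, not_false_iff]
        by_cases hiW : i ∈ W
        · have hiV : i ∉ fsupp V := fun h => hiS (Finset.mem_inter.2 ⟨h, hiW⟩)
          rw [mem_fsupp, not_not] at hiV
          simp [hiW, hiV]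
        · simp [hiW]
    refine Prod.ext ?_ ?_
    · show Vof (fsupp V ∩ W) (fun i => if i ∈ W then 0 else V i) + β • v = U
      rw [hVeq, ← hUeq]
    · exact hVeq

lemma chi_conj_mul (p : ℕ) [Fact p.Prime] (F : Type) [Field F] [Fintype F] [Algebra (ZMod p) F]
    {n : ℕ} (U V x : Fin n → F) :
    (starRingEnd ℂ) (chiF p F U x) * chiF p F V x = (starRingEnd ℂ) (chiF p F (U - V) x) := by
  unfold chiF
  have h : (∑ i, (U - V) i * x i) = (∑ i, U i * x i) + (-(∑ i, V i * x i)) := by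
    rw [← Finset.sum_neg_distrib, ← Finset.sum_add_distrib]
    exact Finset.sum_congr rfl fun i _ => by simp [sub_mul]; ring
  rw [h, omegaTr_add, map_mul, omegaTr_conj, omegaTr_conj, neg_neg]

/-- with `y_U = χ_U(x)`, the quadratic form `y†Ay` of the level-ℓ Kikuchi
matrix equals `Δ · ∑_{v∈H} ∑_{β∈𝔽*} ω_p^{Tr(β·b_v)} · conj(χ_{βv}(x))`, where
`Δ = C(k,k/2)·C(n−k,ℓ−k/2)·|𝔽*|^{ℓ−k/2}`; equivalently `Φ(x) = y†Ay / (|H|·|𝔽|·Δ)`. -/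
theorem stmt5 (p : ℕ) [Fact p.Prime] (F : Type) [Field F] [Fintype F] [DecidableEq F]
    [CharP F p] [Algebra (ZMod p) F] (n k ℓ : ℕ)
    (hk : 2 ≤ k) (hke : Even k) (h1 : (k : ℝ) / 2 ≤ (ℓ : ℝ)) (h2 : (ℓ : ℝ) ≤ (n : ℝ) / 2)
    (H : Finset (Fin n → F)) (hH : H.Nonempty) (hsp : ∀ v ∈ H, (fsupp v).card = k)
    (b : (Fin n → F) → F) (x : Fin n → F) :
    (∑ U ∈ Finset.univ.filter (fun U : Fin n → F => (fsupp U).card = ℓ),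
        ∑ V ∈ Finset.univ.filter (fun V : Fin n → F => (fsupp V).card = ℓ),
          (starRingEnd ℂ) (chiF p F U x) * kikA p F H b U V * chiF p F V x =
      ((k.choose (k / 2) * (n - k).choose (ℓ - k / 2) *
          (Fintype.card F - 1) ^ (ℓ - k / 2) : ℕ) : ℂ) *
        ∑ v ∈ H, ∑ β ∈ Finset.univ.filter (fun β : F => β ≠ 0),
          omegaTr p F (β * b v) * (starRingEnd ℂ) (chiF p F (β • v) x)) ∧
      (1 / ((H.card : ℂ) * (Fintype.card F : ℂ))) *
          (∑ v ∈ H, ∑ β ∈ Finset.univ.filter (fun β : F => β ≠ 0),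
            omegaTr p F (β * b v) * (starRingEnd ℂ) (chiF p F (β • v) x)) =
        (1 / ((H.card : ℂ) * (Fintype.card F : ℂ) *
            ((k.choose (k / 2) * (n - k).choose (ℓ - k / 2) *
              (Fintype.card F - 1) ^ (ℓ - k / 2) : ℕ) : ℂ))) *
          ∑ U ∈ Finset.univ.filter (fun U : Fin n → F => (fsupp U).card = ℓ),
            ∑ V ∈ Finset.univ.filter (fun V : Fin n → F => (fsupp V).card = ℓ),
              (starRingEnd ℂ) (chiF p F U x) * kikA p F H b U V * chiF p F V x := by
  have hkl : k ≤ 2 * ℓ := by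
    have : (k : ℝ) ≤ 2 * ℓ := by linarith
    exact_mod_cast this
  have hln : 2 * ℓ ≤ n := by
    have : (2 : ℝ) * ℓ ≤ n := by linarith
    exact_mod_cast this
  have part1 : (∑ U ∈ Finset.univ.filter (fun U : Fin n → F => (fsupp U).card = ℓ),
        ∑ V ∈ Finset.univ.filter (fun V : Fin n → F => (fsupp V).card = ℓ),
          (starRingEnd ℂ) (chiF p F U x) * kikA p F H b U V * chiF p F V x) =
      ((k.choose (k / 2) * (n - k).choose (ℓ - k / 2) *
          (Fintype.card F - 1) ^ (ℓ - k / 2) : ℕ) : ℂ) *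
        ∑ v ∈ H, ∑ β ∈ Finset.univ.filter (fun β : F => β ≠ 0),
          omegaTr p F (β * b v) * (starRingEnd ℂ) (chiF p F (β • v) x) := by
    set Sl := Finset.univ.filter (fun U : Fin n → F => (fsupp U).card = ℓ) with hSl
    set Fs := Finset.univ.filter (fun β : F => β ≠ 0) with hFs
    have step1 : ∀ U ∈ Sl, ∀ V ∈ Sl,
        (starRingEnd ℂ) (chiF p F U x) * kikA p F H b U V * chiF p F V x
          = ∑ v ∈ H, ∑ β ∈ Fs, omegaTr p F (β * b v) *
              (starRingEnd ℂ) (chiF p F (β • v) x) *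
              (if U - V = β • v ∧ symmDiff (fsupp U) (fsupp V) = fsupp v then 1 else 0) := by
      intro U _ V _
      unfold kikA
      rw [Finset.mul_sum, Finset.sum_mul]
      refine Finset.sum_congr rfl fun v _ => ?_
      rw [Finset.mul_sum, Finset.sum_mul]
      refine Finset.sum_congr rfl fun β _ => ?_
      by_cases hc : U - V = β • v ∧ symmDiff (fsupp U) (fsupp V) = fsupp v
      · simp only [hc, and_self, if_true, mul_one]
        have := chi_conj_mul p F U V x
        rw [hc.1] at this
        calc (starRingEnd ℂ) (chiF p F U x) * (omegaTr p F (β * b v)) * chiF p F V x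
            = omegaTr p F (β * b v) * ((starRingEnd ℂ) (chiF p F U x) * chiF p F V x) := by ring
          _ = omegaTr p F (β * b v) * (starRingEnd ℂ) (chiF p F (β • v) x) := by rw [this]
      · simp only [hc, if_false, mul_zero, zero_mul]
    rw [Finset.sum_congr rfl (fun U hU => Finset.sum_congr rfl (fun V hV => step1 U hU V hV))]
    rw [← Finset.sum_product']
    rw [Finset.sum_comm]
    rw [Finset.sum_congr rfl (fun v _ => Finset.sum_comm)]
    have step2 : ∀ v ∈ H, ∀ β ∈ Fs,
        (∑ UV ∈ Sl ×ˢ Sl, omegaTr p F (β * b v) * (starRingEnd ℂ) (chiF p F (β • v) x) *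
          (if UV.1 - UV.2 = β • v ∧ symmDiff (fsupp UV.1) (fsupp UV.2) = fsupp v then 1 else 0))
        = ((k.choose (k / 2) * (n - k).choose (ℓ - k / 2) *
            (Fintype.card F - 1) ^ (ℓ - k / 2) : ℕ) : ℂ) *
          (omegaTr p F (β * b v) * (starRingEnd ℂ) (chiF p F (β • v) x)) := by
      intro v hv β hβ
      rw [← Finset.mul_sum, Finset.sum_boole]
      rw [hFs, Finset.mem_filter] at hβ
      have hcount := count_pairs hke hkl hln v (hsp v hv) β hβ.2
      rw [hSl]
      rw [hcount]
      push_cast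
      ring
    rw [Finset.sum_congr rfl (fun v hv => Finset.sum_congr rfl (fun β hβ => step2 v hv β hβ))]
    rw [Finset.mul_sum]
    refine Finset.sum_congr rfl fun v _ => ?_
    rw [Finset.mul_sum]
  refine ⟨part1, ?_⟩
  rw [part1]
  have hq : (Fintype.card F : ℂ) ≠ 0 := by
    exact_mod_cast Fintype.card_ne_zero
  have hHc : (H.card : ℂ) ≠ 0 := by
    exact_mod_cast Finset.card_ne_zero_of_mem hH.choose_spec
  have hq2 : 2 ≤ Fintype.card F := Fintype.one_lt_card
  have hΔ : ((k.choose (k / 2) * (n - k).choose (ℓ - k / 2) *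
      (Fintype.card F - 1) ^ (ℓ - k / 2) : ℕ) : ℂ) ≠ 0 := by
    have h1' : 0 < k.choose (k / 2) := Nat.choose_pos (by omega)
    have h2' : 0 < (n - k).choose (ℓ - k / 2) := Nat.choose_pos (by omega)
    have h3' : 0 < (Fintype.card F - 1) ^ (ℓ - k / 2) := Nat.pow_pos (by omega)
    have : 0 < k.choose (k / 2) * (n - k).choose (ℓ - k / 2) *
        (Fintype.card F - 1) ^ (ℓ - k / 2) := by positivity
    exact_mod_cast this.ne'
  have key : ∀ (c d S : ℂ), d ≠ 0 → 1 / (c * d) * (d * S) = 1 / c * S := by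
    intro c d S hd
    rcases eq_or_ne c 0 with rfl | hc
    · simp
    · field_simp
  exact (key _ _ _ hΔ).symm
end

section
/- Let 𝔽 be a finite field, k ≥ 2 even, and k/2 ≤ ℓ ≤ n/2. Then C(k, k/2) · C(n−k, ℓ−k/2) / C(n, ℓ) ≥ (1/2) · (ℓ/n)^(k/2). Consequently, for any finite nonempty set H of k-sparse vectors in 𝔽ⁿ, the average degree d = |H| · |𝔽*| · Δ / N of the level-ℓ Kikuchi graph satisfies d ≥ (|𝔽*|/2) · (ℓ/(|𝔽*|·n))^(k/2) · |H|, where Δ = C(k,k/2)·C(n−k, ℓ−k/2)·|𝔽*|^(ℓ−k/2) and N = |𝔽*|^ℓ·C(n,ℓ). -/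
set_option maxHeartbeats 1000000

open Finset

/-- Bernoulli-type bound: `(1+u)^m (1 - m u) ≤ 1` for `u ≥ 0`. -/
lemma stmt6_bern2 (m : ℕ) (u : ℝ) (hu : 0 ≤ u) : (1+u)^m * (1 - m*u) ≤ 1 := by
  induction m with
  | zero => simp
  | succ m ih =>
    have h1 : (0:ℝ) ≤ (1+u)^m := by positivity
    have h2 : (1+u) * (1 - (m+1:ℕ)*u) ≤ 1 - m*u := by
      push_cast
      nlinarith [mul_nonneg hu hu, mul_nonneg (mul_nonneg (Nat.cast_nonneg (α := ℝ) m) hu) hu]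
    calc (1+u)^(m+1) * (1 - (m+1:ℕ)*u) = (1+u)^m * ((1+u) * (1 - (m+1:ℕ)*u)) := by ring
    _ ≤ (1+u)^m * (1 - m*u) := by nlinarith
    _ ≤ 1 := ih

/-- Padé-type bound: `(1+u)^m (2 - m u) ≤ 2 + m u` for `u ≥ 0`. -/
lemma stmt6_pade (m : ℕ) (u : ℝ) (hu : 0 ≤ u) : (1+u)^m * (2 - m*u) ≤ 2 + m*u := by
  induction m with
  | zero => simp
  | succ m ih =>
    have h1 : (0:ℝ) ≤ (1+u)^m := by positivity
    have hb : (1+u)^m * (1 - m*u) ≤ 1 := stmt6_bern2 m u hu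
    have hb' : (1+u)^m * (1 - (m+1:ℕ)*u) ≤ 1 := by
      push_cast
      push_cast at hb
      nlinarith
    have key : (1+u)^(m+1) * (2 - (m+1:ℕ)*u)
        = (1+u)^m * (2 - m*u) + u * ((1+u)^m * (1 - (m+1:ℕ)*u)) := by
      push_cast; ring
    have h3 : u * ((1+u)^m * (1 - (m+1:ℕ)*u)) ≤ u := by nlinarith
    push_cast at key ih h3 ⊢
    linarith

/-- The induction-step polynomial-analytic inequality. -/
lemma stmt6_core (m ℓ n : ℕ) (hml : m + 1 ≤ ℓ) (hln : 2*ℓ ≤ n) :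
    ((m:ℝ)+1) * ((n:ℝ) - (2*(m:ℝ)+1)) * ((ℓ:ℝ) * ((n:ℝ)-1))^m
      ≤ 2*(2*(m:ℝ)+1) * ((n:ℝ) - ℓ - m) * ((n:ℝ) * ((ℓ:ℝ)-1))^m := by
  have hml' : ((m:ℝ)) + 1 ≤ (ℓ:ℝ) := by exact_mod_cast hml
  have hln' : 2*(ℓ:ℝ) ≤ (n:ℝ) := by exact_mod_cast hln
  rcases Nat.eq_zero_or_pos m with rfl | hm
  · simp only [Nat.cast_zero, pow_zero]
    nlinarith
  have hm' : (1:ℝ) ≤ (m:ℝ) := by exact_mod_cast hm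
  set y : ℝ := (n:ℝ) * ((ℓ:ℝ)-1) with hy_def
  have hy : 0 < y := by
    have h2 : (2:ℝ) ≤ n := by linarith
    have h3 : (1:ℝ) ≤ (ℓ:ℝ) - 1 := by linarith
    nlinarith
  set d : ℝ := (n:ℝ) - (ℓ:ℝ) with hd_def
  have hd : 0 ≤ d := by simp only [hd_def]; linarith
  set u : ℝ := d / y with hu_def
  have hu : 0 ≤ u := div_nonneg hd hy.le
  have hdy : d = u * y := by rw [hu_def, div_mul_cancel₀ d hy.ne']
  have hx : (ℓ:ℝ) * ((n:ℝ)-1) = y * (1+u) := by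
    have h : y * (1+u) = y + d := by rw [mul_add, mul_one, mul_comm y u, ← hdy]
    rw [h, hy_def, hd_def]; ring
  have hmd : (m:ℝ) * d ≤ y := by
    rw [hy_def, hd_def]
    nlinarith
  have hmu : (m:ℝ) * u ≤ 1 := by
    rw [hu_def, mul_div_assoc']
    exact (div_le_one hy).mpr hmd
  have h2mu : (1:ℝ) ≤ 2 - (m:ℝ)*u := by linarith
  have hp := stmt6_pade m u hu
  have hpoly : ((m:ℝ)+1) * ((n:ℝ) - (2*(m:ℝ)+1)) * (2*y + (m:ℝ)*d)
      ≤ 2*(2*(m:ℝ)+1) * ((n:ℝ) - ℓ - m) * (2*y - (m:ℝ)*d) := by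
    obtain ⟨p, q, r, h₁, h₂, h₃⟩ : ∃ p q r, m = p+1 ∧ ℓ = p+q+2 ∧ n = 2*p+2*q+r+4 :=
      ⟨m-1, ℓ-m-1, n-2*ℓ, by omega, by omega, by omega⟩
    rw [hy_def, hd_def]
    subst h₁ h₂ h₃
    push_cast
    set P := ((p:ℝ)) with hP
    set Q := ((q:ℝ)) with hQ
    set R := ((r:ℝ)) with hR
    linarith [(show (0:ℝ) ≤ R by positivity),
      (show (0:ℝ) ≤ Q by positivity),
      (show (0:ℝ) ≤ Q*R by positivity),
      (show (0:ℝ) ≤ Q*R*R by positivity),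
      (show (0:ℝ) ≤ Q*Q by positivity),
      (show (0:ℝ) ≤ Q*Q*R by positivity),
      (show (0:ℝ) ≤ Q*Q*Q by positivity),
      (show (0:ℝ) ≤ P by positivity),
      (show (0:ℝ) ≤ P*R by positivity),
      (show (0:ℝ) ≤ P*R*R by positivity),
      (show (0:ℝ) ≤ P*Q by positivity),
      (show (0:ℝ) ≤ P*Q*R by positivity),
      (show (0:ℝ) ≤ P*Q*R*R by positivity),
      (show (0:ℝ) ≤ P*Q*Q by positivity),
      (show (0:ℝ) ≤ P*Q*Q*R by positivity),
      (show (0:ℝ) ≤ P*Q*Q*Q by positivity),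
      (show (0:ℝ) ≤ P*P by positivity),
      (show (0:ℝ) ≤ P*P*R by positivity),
      (show (0:ℝ) ≤ P*P*R*R by positivity),
      (show (0:ℝ) ≤ P*P*Q by positivity),
      (show (0:ℝ) ≤ P*P*Q*R by positivity),
      (show (0:ℝ) ≤ P*P*Q*Q by positivity),
      (show (0:ℝ) ≤ P*P*P by positivity),
      (show (0:ℝ) ≤ P*P*P*R by positivity),
      (show (0:ℝ) ≤ P*P*P*Q by positivity)]
  have h1 : (((m:ℝ)+1) * ((n:ℝ) - (2*(m:ℝ)+1)) * (2 + (m:ℝ)*u)) * y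
      ≤ (2*(2*(m:ℝ)+1) * ((n:ℝ) - ℓ - m) * (2 - (m:ℝ)*u)) * y := by
    rw [hdy] at hpoly
    linear_combination hpoly
  have hconv := le_of_mul_le_mul_right h1 hy
  have hA : (0:ℝ) ≤ ((m:ℝ)+1) * ((n:ℝ) - (2*(m:ℝ)+1)) := by nlinarith
  have hyp : (0:ℝ) ≤ y^m := by positivity
  have hfin : ((m:ℝ)+1) * ((n:ℝ) - (2*(m:ℝ)+1)) * ((ℓ:ℝ) * ((n:ℝ)-1))^m * (2 - (m:ℝ)*u)
      ≤ 2*(2*(m:ℝ)+1) * ((n:ℝ) - ℓ - m) * ((n:ℝ) * ((ℓ:ℝ)-1))^m * (2 - (m:ℝ)*u) := by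
    calc ((m:ℝ)+1) * ((n:ℝ) - (2*(m:ℝ)+1)) * ((ℓ:ℝ) * ((n:ℝ)-1))^m * (2 - (m:ℝ)*u)
        = (((m:ℝ)+1) * ((n:ℝ) - (2*(m:ℝ)+1))) * (y^m * ((1+u)^m * (2 - (m:ℝ)*u))) := by
          rw [hx, mul_pow]; ring
      _ ≤ (((m:ℝ)+1) * ((n:ℝ) - (2*(m:ℝ)+1))) * (y^m * (2 + (m:ℝ)*u)) := by
          apply mul_le_mul_of_nonneg_left _ hA
          exact mul_le_mul_of_nonneg_left hp hyp
      _ ≤ (2*(2*(m:ℝ)+1) * ((n:ℝ) - ℓ - m) * (2 - (m:ℝ)*u)) * y^m := by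
          have := mul_le_mul_of_nonneg_right hconv hyp
          linarith
      _ = 2*(2*(m:ℝ)+1) * ((n:ℝ) - ℓ - m) * ((n:ℝ) * ((ℓ:ℝ)-1))^m * (2 - (m:ℝ)*u) := by
          rw [hy_def]; ring
  exact le_of_mul_le_mul_right hfin (by linarith)

/-- The main induction: `ℓ^m ⋅ n↙(2m) ⋅ (m!)² ≤ (2m)! ⋅ ℓ↙m ⋅ (n−ℓ)↙m ⋅ n^m`. -/
lemma stmt6_key : ∀ (m ℓ n : ℕ), m ≤ ℓ → 2*ℓ ≤ n →
    (ℓ:ℝ)^m * (n.descFactorial (2*m) : ℝ) * ((m.factorial : ℝ))^2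
      ≤ ((2*m).factorial : ℝ) * (ℓ.descFactorial m : ℝ) * ((n-ℓ).descFactorial m : ℝ) * (n:ℝ)^m := by
  intro m
  induction m with
  | zero => intro ℓ n _ _; simp
  | succ m IH =>
    intro ℓ n hml hln
    have hℓ1 : 1 ≤ ℓ := by omega
    have hn2 : 2 ≤ n := by omega
    have eA : ℓ.descFactorial (m+1) = ℓ * (ℓ-1).descFactorial m := by
      have h := Nat.succ_descFactorial_succ (ℓ-1) m
      rwa [show ℓ-1+1 = ℓ by omega] at h
    have eB : (n-ℓ).descFactorial (m+1) = (n-ℓ-m) * (n-ℓ).descFactorial m :=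
      Nat.descFactorial_succ _ m
    have eC : n.descFactorial (2*(m+1)) = n * ((n-1-2*m) * (n-1).descFactorial (2*m)) := by
      have h1 := Nat.succ_descFactorial_succ (n-1) (2*m+1)
      rw [show n-1+1 = n by omega] at h1
      rw [show 2*(m+1) = 2*m+1+1 by omega, h1, Nat.descFactorial_succ]
    have eE : (2*(m+1)).factorial = (2*m+1+1) * ((2*m+1) * (2*m).factorial) := by
      rw [show 2*(m+1) = 2*m+1+1 by omega, Nat.factorial_succ, Nat.factorial_succ]
    have hIH := IH (ℓ-1) (n-1) (by omega) (by omega)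
    rw [show n-1-(ℓ-1) = n-ℓ by omega] at hIH
    have hstep := stmt6_core m ℓ n hml hln
    rw [mul_pow, mul_pow] at hstep
    rw [eA, eB, eC, eE, Nat.factorial_succ]
    push_cast [Nat.cast_sub hℓ1, Nat.cast_sub (show 1 ≤ n by omega),
      Nat.cast_sub (show 2*m ≤ n-1 by omega), Nat.cast_sub (show ℓ ≤ n by omega),
      Nat.cast_sub (show m ≤ n - ℓ by omega)] at hIH ⊢
    have hL1 : (1:ℝ) ≤ (ℓ:ℝ) := by exact_mod_cast hℓ1
    have hN2 : (2:ℝ) ≤ (n:ℝ) := by exact_mod_cast hn2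
    have hML : (m:ℝ) + 1 ≤ (ℓ:ℝ) := by exact_mod_cast hml
    have hLN : 2*(ℓ:ℝ) ≤ (n:ℝ) := by exact_mod_cast hln
    have hM0 : (0:ℝ) ≤ (m:ℝ) := by positivity
    have h2m : (0:ℝ) ≤ (n:ℝ)-1-2*(m:ℝ) := by linarith
    have hNL : (0:ℝ) ≤ (n:ℝ)-(ℓ:ℝ)-(m:ℝ) := by linarith
    have ha0 : (0:ℝ) ≤ ((ℓ-1).descFactorial m : ℝ) := by positivity
    have hb0 : (0:ℝ) ≤ ((n-ℓ).descFactorial m : ℝ) := by positivity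
    have hG0 : (0:ℝ) ≤ ((2*m).factorial : ℝ) := by positivity
    have hN1m : (0:ℝ) ≤ ((n:ℝ)-1)^m := pow_nonneg (by linarith) m
    have hL1m : (0:ℝ) < ((ℓ:ℝ)-1)^m := by
      rcases Nat.eq_zero_or_pos m with rfl | hm
      · simp
      · have h1 : (1:ℝ) ≤ (m:ℝ) := by exact_mod_cast hm
        exact pow_pos (by linarith) m
    have hN1mpos : (0:ℝ) < ((n:ℝ)-1)^m := pow_pos (by linarith) m
    apply le_of_mul_le_mul_right _ (mul_pos hL1m hN1mpos)
    have hc1 : (0:ℝ) ≤ (ℓ:ℝ)^(m+1) * (n:ℝ) * ((n:ℝ)-1-2*(m:ℝ)) * ((m:ℝ)+1)^2 * ((n:ℝ)-1)^m := by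
      have h1 : (0:ℝ) ≤ (ℓ:ℝ)^(m+1) := by positivity
      have h2 : (0:ℝ) ≤ (n:ℝ) := by linarith
      have h3 : (0:ℝ) ≤ ((m:ℝ)+1)^2 := by positivity
      exact mul_nonneg (mul_nonneg (mul_nonneg (mul_nonneg h1 h2) h2m) h3) hN1m
    have hc2 : (0:ℝ) ≤ ((2*m).factorial : ℝ) * ((ℓ-1).descFactorial m : ℝ) *
        ((n-ℓ).descFactorial m : ℝ) * (ℓ:ℝ) * (n:ℝ) * ((m:ℝ)+1) * ((n:ℝ)-1)^m := by
      exact mul_nonneg (mul_nonneg (mul_nonneg (mul_nonneg (mul_nonneg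
        (mul_nonneg hG0 ha0) hb0) (by linarith : (0:ℝ) ≤ (ℓ:ℝ))) (by linarith : (0:ℝ) ≤ (n:ℝ)))
        (by linarith : (0:ℝ) ≤ (m:ℝ)+1)) hN1m
    calc (ℓ:ℝ)^(m+1) * ((n:ℝ) * (((n:ℝ)-1-2*(m:ℝ)) * ((n-1).descFactorial (2*m) : ℝ)))
          * (((m:ℝ)+1)*(m.factorial:ℝ))^2 * (((ℓ:ℝ)-1)^m * ((n:ℝ)-1)^m)
        = ((((ℓ:ℝ)-1))^m * ((n-1).descFactorial (2*m) : ℝ) * ((m.factorial:ℝ))^2)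
            * ((ℓ:ℝ)^(m+1) * (n:ℝ) * ((n:ℝ)-1-2*(m:ℝ)) * ((m:ℝ)+1)^2 * ((n:ℝ)-1)^m) := by ring
      _ ≤ (((2*m).factorial : ℝ) * ((ℓ-1).descFactorial m : ℝ) * ((n-ℓ).descFactorial m : ℝ)
            * ((n:ℝ)-1)^m)
            * ((ℓ:ℝ)^(m+1) * (n:ℝ) * ((n:ℝ)-1-2*(m:ℝ)) * ((m:ℝ)+1)^2 * ((n:ℝ)-1)^m) :=
          mul_le_mul_of_nonneg_right hIH hc1
      _ = (((m:ℝ)+1) * ((n:ℝ)-(2*(m:ℝ)+1)) * ((ℓ:ℝ)^m * ((n:ℝ)-1)^m))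
            * (((2*m).factorial : ℝ) * ((ℓ-1).descFactorial m : ℝ) * ((n-ℓ).descFactorial m : ℝ)
              * (ℓ:ℝ) * (n:ℝ) * ((m:ℝ)+1) * ((n:ℝ)-1)^m) := by ring
      _ ≤ (2*(2*(m:ℝ)+1) * ((n:ℝ)-(ℓ:ℝ)-(m:ℝ)) * ((n:ℝ)^m * (((ℓ:ℝ)-1))^m))
            * (((2*m).factorial : ℝ) * ((ℓ-1).descFactorial m : ℝ) * ((n-ℓ).descFactorial m : ℝ)
              * (ℓ:ℝ) * (n:ℝ) * ((m:ℝ)+1) * ((n:ℝ)-1)^m) :=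
          mul_le_mul_of_nonneg_right hstep hc2
      _ = (2*(m:ℝ)+1+1) * ((2*(m:ℝ)+1) * ((2*m).factorial : ℝ))
            * ((ℓ:ℝ) * ((ℓ-1).descFactorial m : ℝ))
            * (((n:ℝ)-(ℓ:ℝ)-(m:ℝ)) * ((n-ℓ).descFactorial m : ℝ)) * (n:ℝ)^(m+1)
            * (((ℓ:ℝ)-1)^m * ((n:ℝ)-1)^m) := by ring

/-- The hypergeometric-type identity. -/
lemma stmt6_idty (m ℓ n : ℕ) (hml : m ≤ ℓ) (hln : 2*ℓ ≤ n) :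
    n.descFactorial (2*m) * (n-2*m).choose (ℓ-m)
      = n.choose ℓ * ℓ.descFactorial m * (n-ℓ).descFactorial m := by
  have hfpos : 0 < (ℓ-m).factorial * (n-ℓ-m).factorial :=
    Nat.mul_pos (Nat.factorial_pos _) (Nat.factorial_pos _)
  apply Nat.eq_of_mul_eq_mul_right hfpos
  have h1 : (n.descFactorial (2*m) * (n-2*m).choose (ℓ-m)) * ((ℓ-m).factorial * (n-ℓ-m).factorial)
      = n.factorial := by
    have e1 : (n-2*m).choose (ℓ-m) * (ℓ-m).factorial * ((n-2*m)-(ℓ-m)).factorial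
        = (n-2*m).factorial := Nat.choose_mul_factorial_mul_factorial (by omega)
    rw [show (n-2*m)-(ℓ-m) = n-ℓ-m by omega] at e1
    calc (n.descFactorial (2*m) * (n-2*m).choose (ℓ-m)) * ((ℓ-m).factorial * (n-ℓ-m).factorial)
        = ((n-2*m).choose (ℓ-m) * (ℓ-m).factorial * (n-ℓ-m).factorial) * n.descFactorial (2*m) := by
          ring
      _ = (n-2*m).factorial * n.descFactorial (2*m) := by rw [e1]
      _ = n.factorial := Nat.factorial_mul_descFactorial (by omega)
  have h2 : (n.choose ℓ * ℓ.descFactorial m * (n-ℓ).descFactorial m)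
        * ((ℓ-m).factorial * (n-ℓ-m).factorial) = n.factorial := by
    have e2 : (ℓ-m).factorial * ℓ.descFactorial m = ℓ.factorial :=
      Nat.factorial_mul_descFactorial hml
    have e3 : ((n-ℓ)-m).factorial * (n-ℓ).descFactorial m = (n-ℓ).factorial :=
      Nat.factorial_mul_descFactorial (by omega)
    rw [show n-ℓ-m = (n-ℓ)-m by omega]
    calc (n.choose ℓ * ℓ.descFactorial m * (n-ℓ).descFactorial m)
          * ((ℓ-m).factorial * ((n-ℓ)-m).factorial)
        = n.choose ℓ * ((ℓ-m).factorial * ℓ.descFactorial m)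
            * (((n-ℓ)-m).factorial * (n-ℓ).descFactorial m) := by ring
      _ = n.choose ℓ * ℓ.factorial * (n-ℓ).factorial := by rw [e2, e3]
      _ = n.factorial := Nat.choose_mul_factorial_mul_factorial (by omega)
  rw [h1, h2]

/-- The clean binomial inequality `ℓ^m C(n,ℓ) ≤ C(2m,m) C(n−2m,ℓ−m) n^m`. -/
lemma stmt6_main_ineq (m ℓ n : ℕ) (hml : m ≤ ℓ) (hln : 2*ℓ ≤ n) :
    (ℓ:ℝ)^m * (n.choose ℓ : ℝ) ≤ ((2*m).choose m : ℝ) * ((n-2*m).choose (ℓ-m) : ℝ) * (n:ℝ)^m := by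
  have hkey := stmt6_key m ℓ n hml hln
  have hG : ((2*m).factorial : ℝ) = ((2*m).choose m : ℝ) * ((m.factorial : ℝ))^2 := by
    have h := Nat.choose_mul_factorial_mul_factorial (show m ≤ 2*m by omega)
    rw [show 2*m-m = m by omega] at h
    calc ((2*m).factorial : ℝ) = (((2*m).choose m * m.factorial * m.factorial : ℕ) : ℝ) := by
          rw [h]
      _ = ((2*m).choose m : ℝ) * ((m.factorial : ℝ))^2 := by push_cast; ring
  have hid : (n.descFactorial (2*m) : ℝ) * ((n-2*m).choose (ℓ-m) : ℝ)
      = (n.choose ℓ : ℝ) * (ℓ.descFactorial m : ℝ) * ((n-ℓ).descFactorial m : ℝ) := by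
    exact_mod_cast congrArg (Nat.cast (R := ℝ)) (stmt6_idty m ℓ n hml hln)
  have hC0 : (0:ℝ) ≤ ((n-2*m).choose (ℓ-m) : ℝ) := by positivity
  have hmul := mul_le_mul_of_nonneg_right hkey hC0
  have ha : (0:ℝ) < (ℓ.descFactorial m : ℝ) := by
    exact_mod_cast Nat.pos_of_ne_zero (fun h => by
      have := Nat.descFactorial_eq_zero_iff_lt.mp h; omega)
  have hb : (0:ℝ) < ((n-ℓ).descFactorial m : ℝ) := by
    exact_mod_cast Nat.pos_of_ne_zero (fun h => by
      have := Nat.descFactorial_eq_zero_iff_lt.mp h; omega)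
  have hF : (0:ℝ) < ((m.factorial : ℝ))^2 := by positivity
  apply le_of_mul_le_mul_right _ (mul_pos (mul_pos ha hb) hF)
  calc (ℓ:ℝ)^m * (n.choose ℓ : ℝ) * ((ℓ.descFactorial m : ℝ) * ((n-ℓ).descFactorial m : ℝ)
        * ((m.factorial : ℝ))^2)
      = (ℓ:ℝ)^m * ((n.choose ℓ : ℝ) * (ℓ.descFactorial m : ℝ) * ((n-ℓ).descFactorial m : ℝ))
          * ((m.factorial : ℝ))^2 := by ring
    _ = (ℓ:ℝ)^m * ((n.descFactorial (2*m) : ℝ) * ((n-2*m).choose (ℓ-m) : ℝ))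
          * ((m.factorial : ℝ))^2 := by rw [hid]
    _ = ((ℓ:ℝ)^m * (n.descFactorial (2*m) : ℝ) * ((m.factorial : ℝ))^2)
          * ((n-2*m).choose (ℓ-m) : ℝ) := by ring
    _ ≤ (((2*m).factorial : ℝ) * (ℓ.descFactorial m : ℝ) * ((n-ℓ).descFactorial m : ℝ) * (n:ℝ)^m)
          * ((n-2*m).choose (ℓ-m) : ℝ) := hmul
    _ = ((2*m).choose m : ℝ) * ((n-2*m).choose (ℓ-m) : ℝ) * (n:ℝ)^m
          * ((ℓ.descFactorial m : ℝ) * ((n-ℓ).descFactorial m : ℝ) * ((m.factorial : ℝ))^2) := by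
        rw [hG]; ring

/-- binomial estimate `C(k,k/2)·C(n−k,ℓ−k/2)/C(n,ℓ) ≥ (1/2)·(ℓ/n)^{k/2}`, and
the resulting lower bound `d = |H|·|𝔽*|·Δ/N ≥ (|𝔽*|/2)·(ℓ/(|𝔽*|·n))^{k/2}·|H|` on the
average degree of the level-ℓ Kikuchi graph, where `Δ = C(k,k/2)·C(n−k,ℓ−k/2)·|𝔽*|^{ℓ−k/2}`
and `N = |𝔽*|^ℓ·C(n,ℓ)`. -/
theorem stmt6 (F : Type) [Field F] [Fintype F] [DecidableEq F] (n k ℓ : ℕ)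
    (hk : 2 ≤ k) (hke : Even k) (h1 : (k : ℝ) / 2 ≤ (ℓ : ℝ)) (h2 : (ℓ : ℝ) ≤ (n : ℝ) / 2)
    (H : Finset (Fin n → F)) (hH : H.Nonempty)
    (hsp : ∀ v ∈ H, (fsupp v).card = k) :
    (1 / 2 : ℝ) * ((ℓ : ℝ) / (n : ℝ)) ^ (k / 2) ≤
        ((k.choose (k / 2) : ℝ) * ((n - k).choose (ℓ - k / 2) : ℝ)) / (n.choose ℓ : ℝ) ∧
      (((Fintype.card F : ℝ) - 1) / 2) *
          ((ℓ : ℝ) / (((Fintype.card F : ℝ) - 1) * (n : ℝ))) ^ (k / 2) * (H.card : ℝ) ≤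
        (H.card : ℝ) * ((Fintype.card F : ℝ) - 1) *
            ((k.choose (k / 2) * (n - k).choose (ℓ - k / 2) *
              (Fintype.card F - 1) ^ (ℓ - k / 2) : ℕ) : ℝ) /
          (((Fintype.card F - 1) ^ ℓ * n.choose ℓ : ℕ) : ℝ) := by
  obtain ⟨m, rfl⟩ := hke
  have hk2 : (m + m) / 2 = m := by omega
  have hm1 : 1 ≤ m := by omega
  have hml : m ≤ ℓ := by
    have : (m:ℝ) ≤ (ℓ:ℝ) := by push_cast at h1; linarith
    exact_mod_cast this
  have hln : 2*ℓ ≤ n := by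
    have : 2*(ℓ:ℝ) ≤ (n:ℝ) := by linarith
    exact_mod_cast this
  have hℓ1 : 1 ≤ ℓ := by omega
  have hn2 : 2 ≤ n := by omega
  have hnR : (0:ℝ) < (n:ℝ) := by positivity
  have hCn : (0:ℝ) < (n.choose ℓ : ℝ) := by
    exact_mod_cast Nat.choose_pos (show ℓ ≤ n by omega)
  have hnm : (0:ℝ) < (n:ℝ)^m := by positivity
  have hmain := stmt6_main_ineq m ℓ n hml hln
  rw [hk2, show m + m = 2*m by omega]
  have hpart1 : (ℓ:ℝ)^m/(n:ℝ)^m ≤ ((2*m).choose m : ℝ) * ((n-2*m).choose (ℓ-m) : ℝ) / (n.choose ℓ : ℝ) := by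
    rw [div_le_div_iff₀ hnm hCn]
    linarith [hmain]
  have hX0 : (0:ℝ) ≤ (ℓ:ℝ)^m/(n:ℝ)^m := by positivity
  have hhalf : (1/2:ℝ) * ((ℓ:ℝ)^m/(n:ℝ)^m)
      ≤ ((2*m).choose m : ℝ) * ((n-2*m).choose (ℓ-m) : ℝ) / (n.choose ℓ : ℝ) := by linarith
  constructor
  · rw [div_pow]
    linarith
  · have hc2 : 2 ≤ Fintype.card F := Fintype.one_lt_card
    have hc1 : 1 ≤ Fintype.card F := by omega
    have hcR : (2:ℝ) ≤ (Fintype.card F : ℝ) := by exact_mod_cast hc2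
    have hq0 : (0:ℝ) < (Fintype.card F : ℝ) - 1 := by linarith
    have hH0 : (0:ℝ) ≤ (H.card : ℝ) := by positivity
    push_cast [Nat.cast_sub hc1]
    have hqe : ((Fintype.card F : ℝ)-1)^ℓ
        = ((Fintype.card F : ℝ)-1)^(ℓ-m) * ((Fintype.card F : ℝ)-1)^m := by
      rw [← pow_add]; congr 1; omega
    rw [hqe]
    have hqm : (0:ℝ) < ((Fintype.card F : ℝ)-1)^m := pow_pos hq0 m
    have hqlm : (0:ℝ) < ((Fintype.card F : ℝ)-1)^(ℓ-m) := pow_pos hq0 (ℓ-m)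
    have eL : (((Fintype.card F : ℝ)-1)/2) * ((ℓ:ℝ)/(((Fintype.card F : ℝ)-1)*(n:ℝ)))^m * (H.card:ℝ)
        = ((H.card:ℝ)*((Fintype.card F : ℝ)-1)/(((Fintype.card F : ℝ)-1)^m))
            * ((1/2:ℝ) * ((ℓ:ℝ)^m/(n:ℝ)^m)) := by
      rw [div_pow, mul_pow]
      field_simp
    have eR : (H.card:ℝ)*((Fintype.card F : ℝ)-1)
            * (((2*m).choose m : ℝ) * ((n-2*m).choose (ℓ-m) : ℝ) * ((Fintype.card F : ℝ)-1)^(ℓ-m))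
            / (((Fintype.card F : ℝ)-1)^(ℓ-m) * ((Fintype.card F : ℝ)-1)^m * (n.choose ℓ : ℝ))
        = ((H.card:ℝ)*((Fintype.card F : ℝ)-1)/(((Fintype.card F : ℝ)-1)^m))
            * (((2*m).choose m : ℝ) * ((n-2*m).choose (ℓ-m) : ℝ) / (n.choose ℓ : ℝ)) := by
      field_simp
    calc (((Fintype.card F : ℝ)-1)/2) * ((ℓ:ℝ)/(((Fintype.card F : ℝ)-1)*(n:ℝ)))^m * (H.card:ℝ)
        = ((H.card:ℝ)*((Fintype.card F : ℝ)-1)/(((Fintype.card F : ℝ)-1)^m))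
            * ((1/2:ℝ) * ((ℓ:ℝ)^m/(n:ℝ)^m)) := eL
      _ ≤ ((H.card:ℝ)*((Fintype.card F : ℝ)-1)/(((Fintype.card F : ℝ)-1)^m))
            * (((2*m).choose m : ℝ) * ((n-2*m).choose (ℓ-m) : ℝ) / (n.choose ℓ : ℝ)) := by
          apply mul_le_mul_of_nonneg_left hhalf
          positivity
      _ = (H.card:ℝ)*((Fintype.card F : ℝ)-1)
            * (((2*m).choose m : ℝ) * ((n-2*m).choose (ℓ-m) : ℝ) * ((Fintype.card F : ℝ)-1)^(ℓ-m))
            / (((Fintype.card F : ℝ)-1)^(ℓ-m) * ((Fintype.card F : ℝ)-1)^m * (n.choose ℓ : ℝ)) :=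
          eR.symm
end

section
/- Let k be even, k/2 ≤ ℓ ≤ n/2, let H be a finite nonempty set of k-sparse vectors in 𝔽ⁿ, and let t ≥ 1 be an integer. Then ∑ tr(Γ⁻¹A_{v₁,β₁} · Γ⁻¹A_{v₂,β₂} ⋯ Γ⁻¹A_{v_{2t},β_{2t}}) ≤ N · 2^{2t} · (2t/d)^t, where the sum ranges over all trivially closed sequences ((v₁,β₁),…,(v_{2t},β_{2t})) ∈ (H×𝔽*)^{2t}. -/
open Finset

abbrev KIdx (F : Type) [Zero F] [Fintype F] [DecidableEq F] (n ℓ : ℕ) :=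
  {U : Fin n → F // (fsupp U).card = ℓ}

def kikAvb {F : Type} [Field F] [Fintype F] [DecidableEq F] {n ℓ : ℕ}
    (v : Fin n → F) (β : F) : Matrix (KIdx F n ℓ) (KIdx F n ℓ) ℝ := fun U V =>
  if U.1 - V.1 = β • v ∧ symmDiff (fsupp U.1) (fsupp V.1) = fsupp v then 1 else 0

def degU {F : Type} [Field F] [Fintype F] [DecidableEq F] {n : ℕ} (ℓ : ℕ)
    (H : Finset (Fin n → F)) (U : KIdx F n ℓ) : ℕ :=
  ((H ×ˢ Finset.univ.filter (fun β : F => β ≠ 0)).filter fun vb =>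
    ∃ V : KIdx F n ℓ,
      U.1 - V.1 = vb.2 • vb.1 ∧ symmDiff (fsupp U.1) (fsupp V.1) = fsupp vb.1).card

noncomputable def davg (F : Type) [Field F] [Fintype F] [DecidableEq F]
    (n k ℓ : ℕ) (H : Finset (Fin n → F)) : ℝ :=
  (H.card : ℝ) * ((Fintype.card F : ℝ) - 1) *
      ((k.choose (k / 2) * (n - k).choose (ℓ - k / 2) *
        (Fintype.card F - 1) ^ (ℓ - k / 2) : ℕ) : ℝ) /
    (((Fintype.card F - 1) ^ ℓ * n.choose ℓ : ℕ) : ℝ)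

noncomputable def GammaInv (F : Type) [Field F] [Fintype F] [DecidableEq F]
    (n k ℓ : ℕ) (H : Finset (Fin n → F)) : Matrix (KIdx F n ℓ) (KIdx F n ℓ) ℝ :=
  Matrix.diagonal fun U => ((degU ℓ H U : ℝ) + davg F n k ℓ H)⁻¹

section A
variable {F : Type} [Field F] [Fintype F] [DecidableEq F] {n ℓ : ℕ}

def EdgeTo (v : Fin n → F) (β : F) (U V : KIdx F n ℓ) : Prop :=
  U.1 - V.1 = β • v ∧ symmDiff (fsupp U.1) (fsupp V.1) = fsupp v

instance (v : Fin n → F) (β : F) (U V : KIdx F n ℓ) : Decidable (EdgeTo v β U V) :=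
  inferInstanceAs (Decidable (_ ∧ _))

lemma kikAvb_eq (v : Fin n → F) (β : F) (U V : KIdx F n ℓ) :
    kikAvb v β U V = if EdgeTo v β U V then 1 else 0 := rfl

lemma degU_eq (H : Finset (Fin n → F)) (U : KIdx F n ℓ) :
    degU ℓ H U = ((H ×ˢ Finset.univ.filter (fun β : F => β ≠ 0)).filter fun vb =>
      ∃ V : KIdx F n ℓ, EdgeTo vb.1 vb.2 U V).card := rfl

lemma edgeTo_unique {v : Fin n → F} {β : F} {U V V' : KIdx F n ℓ}
    (h : EdgeTo v β U V) (h' : EdgeTo v β U V') : V = V' := by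
  apply Subtype.ext
  have h2 : U.1 - V.1 = U.1 - V'.1 := h.1.trans h'.1.symm
  exact sub_right_injective h2

lemma edgeTo_exists_common {k : ℕ} (hk : 0 < k) {v : Fin n → F} {β : F} {U V : KIdx F n ℓ}
    (hv : (fsupp v).card = k) (hβ : β ≠ 0) (h : EdgeTo v β U V) :
    ∃ i, U.1 i ≠ 0 ∧ v i ≠ 0 := by
  by_contra hno
  push_neg at hno
  have hVval : ∀ i, V.1 i = U.1 i - β * v i := by
    intro i
    have := congrFun h.1 i
    simp only [Pi.sub_apply, Pi.smul_apply, smul_eq_mul] at this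
    linear_combination -this
  have hset : fsupp V.1 = fsupp U.1 ∪ fsupp v := by
    ext i
    simp only [fsupp, mem_filter, mem_univ, true_and, mem_union]
    by_cases hvi : v i = 0
    · rw [hVval i, hvi, mul_zero, sub_zero]
      tauto
    · have hUi : U.1 i = 0 := by
        by_contra hUi; exact hvi (hno i hUi)
      rw [hVval i, hUi, zero_sub, neg_ne_zero]
      constructor
      · intro _; right; exact hvi
      · intro _; exact mul_ne_zero hβ hvi
  have hdisj : Disjoint (fsupp U.1) (fsupp v) := by
    rw [Finset.disjoint_left]
    intro i hi hi2
    simp only [fsupp, mem_filter] at hi hi2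
    exact hi2.2 (hno i hi.2)
  have hcard := V.2
  rw [hset, Finset.card_union_of_disjoint hdisj, U.2, hv] at hcard
  omega

lemma edgeTo_beta_eq {v : Fin n → F} {β : F} {U V : KIdx F n ℓ} {i : Fin n}
    (h : EdgeTo v β U V) (hUi : U.1 i ≠ 0) (hvi : v i ≠ 0) : β = U.1 i * (v i)⁻¹ := by
  have hiU : i ∈ fsupp U.1 := by simp [fsupp, hUi]
  have hiv : i ∈ fsupp v := by simp [fsupp, hvi]
  have hsym := h.2
  have hiV : V.1 i = 0 := by
    have : i ∈ symmDiff (fsupp U.1) (fsupp V.1) := hsym.symm ▸ hiv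
    rw [Finset.mem_symmDiff] at this
    rcases this with ⟨_, hnV⟩ | ⟨_, hnU⟩
    · by_contra hV
      exact hnV (by simp [fsupp, hV])
    · exact absurd hiU hnU
  have := congrFun h.1 i
  simp only [Pi.sub_apply, Pi.smul_apply, smul_eq_mul, hiV, sub_zero] at this
  rw [this, mul_inv_cancel_right₀ hvi]

lemma edgeTo_beta_unique {k : ℕ} (hk : 0 < k) {v : Fin n → F} {β β' : F} {U V V' : KIdx F n ℓ}
    (hv : (fsupp v).card = k) (hβ' : β' ≠ 0)
    (h : EdgeTo v β U V) (h' : EdgeTo v β' U V') : β = β' := by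
  obtain ⟨i, hUi, hvi⟩ := edgeTo_exists_common hk hv hβ' h'
  rw [edgeTo_beta_eq h hUi hvi, edgeTo_beta_eq h' hUi hvi]

end A

section B
variable {F : Type} [Field F] [Fintype F] [DecidableEq F] {n : ℕ}

lemma davg_pos {k ℓ : ℕ} {H : Finset (Fin n → F)} (hH : H.Nonempty)
    (hkl : k ≤ 2 * ℓ) (hln : 2 * ℓ ≤ n) : 0 < davg F n k ℓ H := by
  have hq : 2 ≤ Fintype.card F := Fintype.one_lt_card
  have hq1 : 1 ≤ Fintype.card F - 1 := by omega
  apply div_pos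
  · apply mul_pos
    · apply mul_pos
      · exact_mod_cast Finset.card_pos.mpr hH
      · have : (2 : ℝ) ≤ (Fintype.card F : ℝ) := by exact_mod_cast hq
        linarith
    · have h1 : 0 < k.choose (k / 2) := Nat.choose_pos (by omega)
      have h2 : 0 < (n - k).choose (ℓ - k / 2) := Nat.choose_pos (by omega)
      have h3 : 0 < (Fintype.card F - 1) ^ (ℓ - k / 2) := Nat.pow_pos (by omega)
      exact_mod_cast Nat.mul_pos (Nat.mul_pos h1 h2) h3
  · have h1 : 0 < (Fintype.card F - 1) ^ ℓ := Nat.pow_pos (by omega)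
    have h2 : 0 < n.choose ℓ := Nat.choose_pos (by omega)
    exact_mod_cast Nat.mul_pos h1 h2

lemma card_KIdx_le (ℓ : ℕ) :
    Fintype.card (KIdx F n ℓ) ≤ (Fintype.card F - 1) ^ ℓ * n.choose ℓ := by
  classical
  rw [Fintype.card_subtype]
  have hsub : (univ.filter fun U : Fin n → F => (fsupp U).card = ℓ) ⊆
      ((univ : Finset (Fin n)).powersetCard ℓ).biUnion
        (fun S => univ.filter (fun U : Fin n → F => fsupp U = S)) := by
    intro U hU
    rw [mem_filter] at hU
    rw [mem_biUnion]
    exact ⟨fsupp U, by simp [Finset.mem_powersetCard, hU.2], by simp⟩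
  calc (univ.filter fun U : Fin n → F => (fsupp U).card = ℓ).card
      ≤ _ := Finset.card_le_card hsub
    _ ≤ ∑ S ∈ (univ : Finset (Fin n)).powersetCard ℓ,
          (univ.filter (fun U : Fin n → F => fsupp U = S)).card := Finset.card_biUnion_le
    _ ≤ ∑ _S ∈ (univ : Finset (Fin n)).powersetCard ℓ, (Fintype.card F - 1) ^ ℓ := by
        apply Finset.sum_le_sum
        intro S hS
        rw [Finset.mem_powersetCard] at hS
        have key : (univ.filter (fun U : Fin n → F => fsupp U = S)).card ≤
            Fintype.card ({x // x ∈ S} → {y : F // y ≠ 0}) := by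
          rw [← Finset.card_univ]
          apply Finset.card_le_card_of_injOn
            (fun U => fun i => if h : U i.1 = 0 then ⟨1, one_ne_zero⟩ else ⟨U i.1, h⟩)
          · intro _ _; exact mem_univ _
          · intro U hU U' hU' heq
            simp only [coe_filter, Set.mem_setOf_eq, mem_univ, true_and] at hU hU'
            funext i
            by_cases hi : i ∈ S
            · have hUi : U i ≠ 0 := by
                rw [← hU] at hi; simpa [fsupp] using hi
              have hU'i : U' i ≠ 0 := by
                rw [← hU'] at hi; simpa [fsupp] using hi
              have := congrFun heq ⟨i, hi⟩
              simp only [hUi, hU'i, dif_neg, not_false_iff] at this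
              exact congrArg Subtype.val this
            · have hUi : U i = 0 := by
                by_contra hc
                exact hi (hU ▸ (by simpa [fsupp] using hc : i ∈ fsupp U))
              have hU'i : U' i = 0 := by
                by_contra hc
                exact hi (hU' ▸ (by simpa [fsupp] using hc : i ∈ fsupp U'))
              rw [hUi, hU'i]
        refine key.trans ?_
        rw [Fintype.card_fun, Fintype.card_coe, hS.2]
        have : Fintype.card {y : F // y ≠ 0} = Fintype.card F - 1 := by
          rw [Fintype.card_subtype_compl, Fintype.card_subtype_eq]
        rw [this]
    _ = (Fintype.card F - 1) ^ ℓ * n.choose ℓ := by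
        rw [Finset.sum_const, Finset.card_powersetCard, Finset.card_univ, Fintype.card_fin,
          smul_eq_mul, mul_comm]

end B

lemma image_cons_eq {γ β : Type*} [DecidableEq γ] {m : ℕ} (g : β → γ) (p : β) (s' : Fin m → β) :
    Finset.image (fun i => g ((Fin.cons p s' : Fin (m + 1) → β) i)) Finset.univ =
      insert (g p) (Finset.image (fun i => g (s' i)) Finset.univ) := by
  ext x
  simp only [Finset.mem_image, Finset.mem_univ, true_and, Finset.mem_insert]
  rw [Fin.exists_fin_succ]
  simp [eq_comm]

lemma card_insert_sdiff {γ : Type*} [DecidableEq γ] {P T : Finset γ} {a : γ} (ha : a ∉ P) :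
    (insert a T \ P).card = (T \ insert a P).card + 1 := by
  have h1 : insert a T \ P = insert a (T \ insert a P) := by
    ext x
    by_cases hx : x = a <;> simp [hx, ha]
  rw [h1, Finset.card_insert_of_notMem (by simp)]

section D
variable {F : Type} [Field F] [Fintype F] [DecidableEq F] {n : ℕ}

lemma GK_apply {k ℓ : ℕ} (H : Finset (Fin n → F)) (v : Fin n → F) (β : F) (U V : KIdx F n ℓ) :
    (GammaInv F n k ℓ H * kikAvb v β : Matrix (KIdx F n ℓ) (KIdx F n ℓ) ℝ) U V =
      ((degU ℓ H U : ℝ) + davg F n k ℓ H)⁻¹ * (if EdgeTo v β U V then 1 else 0) := by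
  rw [GammaInv, Matrix.diagonal_mul, kikAvb_eq]

end D

section C
variable {ι : Type} [Fintype ι] [DecidableEq ι]

noncomputable def PhiR (L : List (Matrix ι ι ℝ)) (U : ι) : ℝ := ∑ V, L.prod U V

lemma PhiR_nil (U : ι) : PhiR ([] : List (Matrix ι ι ℝ)) U = 1 := by
  simp [PhiR, Matrix.one_apply]

lemma PhiR_cons (M : Matrix ι ι ℝ) (L : List (Matrix ι ι ℝ)) (U : ι) :
    PhiR (M :: L) U = ∑ W, M U W * PhiR L W := by
  unfold PhiR
  rw [List.prod_cons]
  simp only [Matrix.mul_apply]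
  rw [Finset.sum_comm]
  simp [Finset.mul_sum]

lemma listProd_nonneg (L : List (Matrix ι ι ℝ)) (h : ∀ M ∈ L, ∀ i j, 0 ≤ M i j) :
    ∀ i j, 0 ≤ L.prod i j := by
  induction L with
  | nil => intro i j; rw [List.prod_nil]; by_cases h : i = j <;> simp [Matrix.one_apply, h]
  | cons M L ih =>
    intro i j
    rw [List.prod_cons, Matrix.mul_apply]
    apply Finset.sum_nonneg
    intro W _
    exact mul_nonneg (h M List.mem_cons_self i W)
      (ih (fun M' hM' => h M' (List.mem_cons_of_mem _ hM')) W j)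

lemma PhiR_nonneg (L : List (Matrix ι ι ℝ)) (h : ∀ M ∈ L, ∀ i j, 0 ≤ M i j) (U : ι) :
    0 ≤ PhiR L U :=
  Finset.sum_nonneg fun V _ => listProd_nonneg L h U V

end C

noncomputable def fA (μ : ℝ) : ℕ → ℕ → ℝ
  | 0, _ => 1
  | m + 1, b => μ * fA μ m b + (if b = 0 then 0 else fA μ m (b - 1))

lemma fA_nonneg {μ : ℝ} (hμ : 0 ≤ μ) : ∀ m b, 0 ≤ fA μ m b := by
  intro m
  induction m with
  | zero => intro b; rw [fA]; norm_num
  | succ m ih =>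
    intro b
    rw [fA]
    have h1 := ih b
    have h2 := ih (b - 1)
    positivity

lemma fA_le {μ : ℝ} (hμ0 : 0 ≤ μ) (hμ1 : μ ≤ 1) : ∀ m b, fA μ m b ≤ 2 ^ m * μ ^ (m - b) := by
  intro m
  induction m with
  | zero => intro b; rw [fA]; simp
  | succ m ih =>
    intro b
    rw [fA]
    rcases Nat.eq_zero_or_pos b with hb | hb
    · subst hb
      have h0 : (if (0:ℕ) = 0 then (0:ℝ) else fA μ m (0-1)) = 0 := by simp
      rw [h0, add_zero, Nat.sub_zero]
      have hih := ih 0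
      rw [Nat.sub_zero] at hih
      have h2 : (0:ℝ) ≤ μ ^ (m+1) := by positivity
      calc μ * fA μ m 0 ≤ μ * (2 ^ m * μ ^ m) := mul_le_mul_of_nonneg_left hih hμ0
        _ = 2 ^ m * μ ^ (m + 1) := by ring
        _ ≤ 2 ^ (m + 1) * μ ^ (m + 1) := by
            have h3 : (0:ℝ) ≤ 2 ^ m * μ ^ (m + 1) := by positivity
            have e2 : (2:ℝ) ^ (m + 1) = 2 ^ m + 2 ^ m := by ring
            rw [e2]
            nlinarith [h3]
    · rw [if_neg (by omega)]
      have key1 : μ * fA μ m b ≤ 2 ^ m * μ ^ (m + 1 - b) := by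
        calc μ * fA μ m b ≤ μ * (2 ^ m * μ ^ (m - b)) := mul_le_mul_of_nonneg_left (ih b) hμ0
          _ = 2 ^ m * μ ^ ((m - b) + 1) := by ring
          _ ≤ 2 ^ m * μ ^ (m + 1 - b) := by
              apply mul_le_mul_of_nonneg_left _ (by positivity)
              exact pow_le_pow_of_le_one hμ0 hμ1 (by omega)
      have key2 : fA μ m (b - 1) ≤ 2 ^ m * μ ^ (m + 1 - b) := by
        have := ih (b - 1)
        have heq : m - (b - 1) = m + 1 - b := by omega
        rwa [heq] at this
      have : (2:ℝ) ^ (m + 1) = 2 ^ m + 2 ^ m := by ring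
      rw [this]
      nlinarith

lemma edgeTo_unique' {F : Type} [Field F] [Fintype F] [DecidableEq F] {n ℓ : ℕ}
    {v : Fin n → F} {β : F} {U V V' : KIdx F n ℓ}
    (h : EdgeTo v β U V) (h' : EdgeTo v β U V') : V = V' := by
  apply Subtype.ext
  exact sub_right_injective (h.1.trans h'.1.symm)

set_option maxHeartbeats 1000000 in
lemma keyLemma {F : Type} [Field F] [Fintype F] [DecidableEq F] {n k ℓ : ℕ}
    {H : Finset (Fin n → F)} (c : ℕ) (hk : 2 ≤ k)
    (hsp : ∀ v ∈ H, (fsupp v).card = k) (hd : 0 < davg F n k ℓ H)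
    (hbe : ∀ {v : Fin n → F} {β β' : F} {U V V' : KIdx F n ℓ}, v ∈ H → β' ≠ 0 →
      EdgeTo v β U V → EdgeTo v β' U V' → β = β') :
    ∀ (m b : ℕ) (U : KIdx F n ℓ) (P : Finset (Fin n → F)), P ⊆ H → P.card + m ≤ c →
    ∑ s ∈ Finset.univ.filter (fun s : Fin m → (Fin n → F) × F =>
        (∀ i, (s i).1 ∈ H ∧ (s i).2 ≠ 0) ∧
        ((Finset.image (fun i => (s i).1) Finset.univ) \ P).card ≤ b),
      PhiR (List.ofFn fun i => GammaInv F n k ℓ H * kikAvb (s i).1 (s i).2) U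
      ≤ fA (min 1 ((c : ℝ) / davg F n k ℓ H)) m b := by
  intro m
  induction m with
  | zero =>
    intro b U P hPH hPc
    rw [fA]
    have h1 : (Finset.univ.filter (fun s : Fin 0 → (Fin n → F) × F =>
        (∀ i, (s i).1 ∈ H ∧ (s i).2 ≠ 0) ∧
        ((Finset.image (fun i => (s i).1) Finset.univ) \ P).card ≤ b)) = Finset.univ := by
      apply Finset.filter_true_of_mem
      intro s _
      refine ⟨fun i => i.elim0, ?_⟩
      simp
    rw [h1]
    simp only [List.ofFn_zero, PhiR_nil]
    rw [Finset.sum_const, Finset.card_univ]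
    norm_num [Fintype.card_fun]
  | succ m ih =>
    intro b U P hPH hPc
    classical
    set dv : ℝ := davg F n k ℓ H with hdv
    set μ : ℝ := min 1 ((c : ℝ) / dv) with hμ
    have hμ0 : (0:ℝ) ≤ μ := le_min (by norm_num) (by positivity)
    set w : ℝ := ((degU ℓ H U : ℝ) + dv)⁻¹ with hw
    have hDd : (0:ℝ) < (degU ℓ H U : ℝ) + dv := add_pos_of_nonneg_of_pos (Nat.cast_nonneg _) hd
    have hw0 : (0:ℝ) ≤ w := le_of_lt (inv_pos.mpr hDd)
    have hwd : w ≤ dv⁻¹ := by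
      rw [hw]
      apply inv_anti₀ hd
      have h0 : (0:ℝ) ≤ (degU ℓ H U : ℝ) := Nat.cast_nonneg _
      linarith
    have hDw : (degU ℓ H U : ℝ) * w ≤ 1 := by
      rw [hw, ← div_eq_mul_inv]
      exact (div_le_one hDd).mpr (by linarith)
    set E : Finset ((Fin n → F) × F) :=
      (H ×ˢ Finset.univ.filter (fun β : F => β ≠ 0)).filter
        (fun vb => ∃ V : KIdx F n ℓ, EdgeTo vb.1 vb.2 U V) with hE
    have hEmem : ∀ p : (Fin n → F) × F, p ∈ E ↔
        (p.1 ∈ H ∧ p.2 ≠ 0 ∧ ∃ V : KIdx F n ℓ, EdgeTo p.1 p.2 U V) := by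
      intro p
      rw [hE]
      simp only [Finset.mem_filter, Finset.mem_product, Finset.mem_univ, true_and]
      tauto
    have hEcard : E.card = degU ℓ H U := by rw [hE, degU_eq]
    have hLHS : ∑ s ∈ Finset.univ.filter (fun s : Fin (m+1) → (Fin n → F) × F =>
          (∀ i, (s i).1 ∈ H ∧ (s i).2 ≠ 0) ∧
          ((Finset.image (fun i => (s i).1) Finset.univ) \ P).card ≤ b),
        PhiR (List.ofFn fun i => GammaInv F n k ℓ H * kikAvb (s i).1 (s i).2) U
        = ∑ p : (Fin n → F) × F, ∑ s' : Fin m → (Fin n → F) × F,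
          (if (∀ i : Fin (m+1), ((Fin.cons p s' : Fin (m+1) → (Fin n → F) × F) i).1 ∈ H ∧
                ((Fin.cons p s' : Fin (m+1) → (Fin n → F) × F) i).2 ≠ 0) ∧
              ((Finset.image (fun i => ((Fin.cons p s' : Fin (m+1) → (Fin n → F) × F) i).1)
                Finset.univ) \ P).card ≤ b then
            PhiR (List.ofFn fun i => GammaInv F n k ℓ H *
              kikAvb ((Fin.cons p s' : Fin (m+1) → (Fin n → F) × F) i).1
                ((Fin.cons p s' : Fin (m+1) → (Fin n → F) × F) i).2) U
          else 0) := by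
      rw [Finset.sum_filter]
      rw [← Equiv.sum_comp (Fin.consEquiv (fun _ : Fin (m+1) => (Fin n → F) × F))
        (fun s : Fin (m+1) → (Fin n → F) × F =>
          if (∀ i, (s i).1 ∈ H ∧ (s i).2 ≠ 0) ∧
              ((Finset.image (fun i => (s i).1) Finset.univ) \ P).card ≤ b then
            PhiR (List.ofFn fun i => GammaInv F n k ℓ H * kikAvb (s i).1 (s i).2) U
          else 0)]
      rw [Fintype.sum_prod_type]
      rfl
    rw [hLHS]
    have hper : ∀ p : (Fin n → F) × F,
        (∑ s' : Fin m → (Fin n → F) × F,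
          (if (∀ i : Fin (m+1), ((Fin.cons p s' : Fin (m+1) → (Fin n → F) × F) i).1 ∈ H ∧
                ((Fin.cons p s' : Fin (m+1) → (Fin n → F) × F) i).2 ≠ 0) ∧
              ((Finset.image (fun i => ((Fin.cons p s' : Fin (m+1) → (Fin n → F) × F) i).1)
                Finset.univ) \ P).card ≤ b then
            PhiR (List.ofFn fun i => GammaInv F n k ℓ H *
              kikAvb ((Fin.cons p s' : Fin (m+1) → (Fin n → F) × F) i).1
                ((Fin.cons p s' : Fin (m+1) → (Fin n → F) × F) i).2) U
          else 0))
        ≤ (if p ∈ E ∧ p.1 ∈ P then w * fA μ m b else 0) +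
          (if p ∈ E ∧ p.1 ∉ P then (if b = 0 then 0 else w * fA μ m (b - 1)) else 0) := by
      intro p
      by_cases hpE : p ∈ E
      · obtain ⟨hp1, hp2, V₀, hV₀⟩ := (hEmem p).mp hpE
        have hsplit : ∀ s' : Fin m → (Fin n → F) × F,
            PhiR (List.ofFn fun i => GammaInv F n k ℓ H *
              kikAvb ((Fin.cons p s' : Fin (m+1) → (Fin n → F) × F) i).1
                ((Fin.cons p s' : Fin (m+1) → (Fin n → F) × F) i).2) U
            = w * PhiR (List.ofFn fun i => GammaInv F n k ℓ H * kikAvb (s' i).1 (s' i).2) V₀ := by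
          intro s'
          rw [List.ofFn_succ]
          simp only [Fin.cons_zero, Fin.cons_succ]
          rw [PhiR_cons]
          have hMp : ∀ W, (GammaInv F n k ℓ H * kikAvb p.1 p.2 :
              Matrix (KIdx F n ℓ) (KIdx F n ℓ) ℝ) U W = if W = V₀ then w else 0 := by
            intro W
            rw [GK_apply]
            by_cases hW : EdgeTo p.1 p.2 U W
            · rw [if_pos hW, if_pos (edgeTo_unique' hW hV₀), mul_one, hw]
            · rw [if_neg hW, if_neg, mul_zero]
              rintro rfl
              exact hW hV₀
          simp only [hMp, ite_mul, zero_mul, Finset.sum_ite_eq', Finset.mem_univ, if_true]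
        have hcondAll : ∀ s' : Fin m → (Fin n → F) × F,
            (∀ i : Fin (m+1), ((Fin.cons p s' : Fin (m+1) → (Fin n → F) × F) i).1 ∈ H ∧
              ((Fin.cons p s' : Fin (m+1) → (Fin n → F) × F) i).2 ≠ 0)
            ↔ (∀ i, (s' i).1 ∈ H ∧ (s' i).2 ≠ 0) := by
          intro s'
          rw [Fin.forall_fin_succ]
          simp only [Fin.cons_zero, Fin.cons_succ]
          exact ⟨fun h => h.2, fun h => ⟨⟨hp1, hp2⟩, h⟩⟩
        by_cases hvP : p.1 ∈ P
        · -- old step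
          have hterm : ∀ s' : Fin m → (Fin n → F) × F,
              (if (∀ i : Fin (m+1), ((Fin.cons p s' : Fin (m+1) → (Fin n → F) × F) i).1 ∈ H ∧
                    ((Fin.cons p s' : Fin (m+1) → (Fin n → F) × F) i).2 ≠ 0) ∧
                  ((Finset.image (fun i => ((Fin.cons p s' : Fin (m+1) → (Fin n → F) × F) i).1)
                    Finset.univ) \ P).card ≤ b then
                PhiR (List.ofFn fun i => GammaInv F n k ℓ H *
                  kikAvb ((Fin.cons p s' : Fin (m+1) → (Fin n → F) × F) i).1
                    ((Fin.cons p s' : Fin (m+1) → (Fin n → F) × F) i).2) U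
              else 0)
              = (if (∀ i, (s' i).1 ∈ H ∧ (s' i).2 ≠ 0) ∧
                  ((Finset.image (fun i => (s' i).1) Finset.univ) \ P).card ≤ b then
                w * PhiR (List.ofFn fun i => GammaInv F n k ℓ H * kikAvb (s' i).1 (s' i).2) V₀
              else 0) := by
            intro s'
            rw [hsplit s']
            apply if_congr _ rfl rfl
            apply and_congr (hcondAll s')
            rw [image_cons_eq (fun q : (Fin n → F) × F => q.1) p s']
            rw [Finset.insert_sdiff_of_mem _ hvP]
          rw [Finset.sum_congr rfl (fun s' _ => hterm s')]
          rw [← Finset.sum_filter, ← Finset.mul_sum]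
          have hle := ih b V₀ P hPH (by omega)
          have : w * (∑ s' ∈ Finset.univ.filter (fun s' : Fin m → (Fin n → F) × F =>
              (∀ i, (s' i).1 ∈ H ∧ (s' i).2 ≠ 0) ∧
              ((Finset.image (fun i => (s' i).1) Finset.univ) \ P).card ≤ b),
              PhiR (List.ofFn fun i => GammaInv F n k ℓ H * kikAvb (s' i).1 (s' i).2) V₀)
              ≤ w * fA μ m b := mul_le_mul_of_nonneg_left hle hw0
          refine le_trans this ?_
          rw [if_pos ⟨hpE, hvP⟩, if_neg (fun h => h.2 hvP)]
          simp
        · -- new step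
          by_cases hb0 : b = 0
          · have hzero : ∀ s' : Fin m → (Fin n → F) × F,
                (if (∀ i : Fin (m+1), ((Fin.cons p s' : Fin (m+1) → (Fin n → F) × F) i).1 ∈ H ∧
                      ((Fin.cons p s' : Fin (m+1) → (Fin n → F) × F) i).2 ≠ 0) ∧
                    ((Finset.image (fun i => ((Fin.cons p s' : Fin (m+1) → (Fin n → F) × F) i).1)
                      Finset.univ) \ P).card ≤ b then
                  PhiR (List.ofFn fun i => GammaInv F n k ℓ H *
                    kikAvb ((Fin.cons p s' : Fin (m+1) → (Fin n → F) × F) i).1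
                      ((Fin.cons p s' : Fin (m+1) → (Fin n → F) × F) i).2) U
                else 0) = 0 := by
              intro s'
              rw [if_neg]
              rintro ⟨-, h2⟩
              rw [image_cons_eq (fun q : (Fin n → F) × F => q.1) p s'] at h2
              have hmem : p.1 ∈ insert p.1 (Finset.image (fun i => (s' i).1) Finset.univ) \ P :=
                Finset.mem_sdiff.mpr ⟨Finset.mem_insert_self _ _, hvP⟩
              have := Finset.card_pos.mpr ⟨p.1, hmem⟩
              omega
            rw [Finset.sum_congr rfl (fun s' _ => hzero s')]
            rw [Finset.sum_const, smul_zero]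
            rw [if_neg (fun h => hvP h.2), if_pos ⟨hpE, hvP⟩, if_pos hb0]
            norm_num
          · have hterm : ∀ s' : Fin m → (Fin n → F) × F,
                (if (∀ i : Fin (m+1), ((Fin.cons p s' : Fin (m+1) → (Fin n → F) × F) i).1 ∈ H ∧
                      ((Fin.cons p s' : Fin (m+1) → (Fin n → F) × F) i).2 ≠ 0) ∧
                    ((Finset.image (fun i => ((Fin.cons p s' : Fin (m+1) → (Fin n → F) × F) i).1)
                      Finset.univ) \ P).card ≤ b then
                  PhiR (List.ofFn fun i => GammaInv F n k ℓ H *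
                    kikAvb ((Fin.cons p s' : Fin (m+1) → (Fin n → F) × F) i).1
                      ((Fin.cons p s' : Fin (m+1) → (Fin n → F) × F) i).2) U
                else 0)
                = (if (∀ i, (s' i).1 ∈ H ∧ (s' i).2 ≠ 0) ∧
                    ((Finset.image (fun i => (s' i).1) Finset.univ) \ (insert p.1 P)).card ≤ b - 1 then
                  w * PhiR (List.ofFn fun i => GammaInv F n k ℓ H * kikAvb (s' i).1 (s' i).2) V₀
                else 0) := by
              intro s'
              rw [hsplit s']
              apply if_congr _ rfl rfl
              apply and_congr (hcondAll s')
              rw [image_cons_eq (fun q : (Fin n → F) × F => q.1) p s']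
              rw [card_insert_sdiff hvP]
              omega
            rw [Finset.sum_congr rfl (fun s' _ => hterm s')]
            rw [← Finset.sum_filter, ← Finset.mul_sum]
            have hle := ih (b - 1) V₀ (insert p.1 P) (Finset.insert_subset hp1 hPH)
              (by have := Finset.card_insert_le p.1 P; omega)
            have hmul : w * (∑ s' ∈ Finset.univ.filter (fun s' : Fin m → (Fin n → F) × F =>
                (∀ i, (s' i).1 ∈ H ∧ (s' i).2 ≠ 0) ∧
                ((Finset.image (fun i => (s' i).1) Finset.univ) \ (insert p.1 P)).card ≤ b - 1),
                PhiR (List.ofFn fun i => GammaInv F n k ℓ H * kikAvb (s' i).1 (s' i).2) V₀)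
                ≤ w * fA μ m (b - 1) := mul_le_mul_of_nonneg_left hle hw0
            refine le_trans hmul ?_
            rw [if_neg (fun h => hvP h.2), if_pos ⟨hpE, hvP⟩, if_neg hb0]
            norm_num
      · -- p has no edge
        have hzero : ∀ s' : Fin m → (Fin n → F) × F,
            (if (∀ i : Fin (m+1), ((Fin.cons p s' : Fin (m+1) → (Fin n → F) × F) i).1 ∈ H ∧
                  ((Fin.cons p s' : Fin (m+1) → (Fin n → F) × F) i).2 ≠ 0) ∧
                ((Finset.image (fun i => ((Fin.cons p s' : Fin (m+1) → (Fin n → F) × F) i).1)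
                  Finset.univ) \ P).card ≤ b then
              PhiR (List.ofFn fun i => GammaInv F n k ℓ H *
                kikAvb ((Fin.cons p s' : Fin (m+1) → (Fin n → F) × F) i).1
                  ((Fin.cons p s' : Fin (m+1) → (Fin n → F) × F) i).2) U
            else 0) = 0 := by
          intro s'
          by_cases hc : (∀ i : Fin (m+1), ((Fin.cons p s' : Fin (m+1) → (Fin n → F) × F) i).1 ∈ H ∧
                  ((Fin.cons p s' : Fin (m+1) → (Fin n → F) × F) i).2 ≠ 0) ∧
                ((Finset.image (fun i => ((Fin.cons p s' : Fin (m+1) → (Fin n → F) × F) i).1)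
                  Finset.univ) \ P).card ≤ b
          · rw [if_pos hc]
            have hp0 := hc.1 0
            rw [Fin.cons_zero] at hp0
            have hnoV : ¬ ∃ V : KIdx F n ℓ, EdgeTo p.1 p.2 U V := by
              intro hV
              exact hpE ((hEmem p).mpr ⟨hp0.1, hp0.2, hV⟩)
            rw [List.ofFn_succ]
            simp only [Fin.cons_zero, Fin.cons_succ]
            rw [PhiR_cons]
            apply Finset.sum_eq_zero
            intro W _
            rw [GK_apply, if_neg (fun hW => hnoV ⟨W, hW⟩), mul_zero, zero_mul]
          · rw [if_neg hc]
        rw [Finset.sum_congr rfl (fun s' _ => hzero s')]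
        rw [Finset.sum_const, smul_zero]
        rw [if_neg (fun h => hpE h.1), if_neg (fun h => hpE h.1)]
        norm_num
    refine le_trans (Finset.sum_le_sum (fun p _ => hper p)) ?_
    rw [Finset.sum_add_distrib]
    have hfe1 : Finset.univ.filter (fun p : (Fin n → F) × F => p ∈ E ∧ p.1 ∈ P)
        = E.filter (fun p => p.1 ∈ P) := by
      ext p
      simp [Finset.mem_filter]
    have hfe2 : Finset.univ.filter (fun p : (Fin n → F) × F => p ∈ E ∧ p.1 ∉ P)
        = E.filter (fun p => p.1 ∉ P) := by
      ext p
      simp [Finset.mem_filter]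
    have e1 : ∑ p : (Fin n → F) × F, (if p ∈ E ∧ p.1 ∈ P then w * fA μ m b else 0)
        = ((E.filter (fun p => p.1 ∈ P)).card : ℝ) * (w * fA μ m b) := by
      rw [← Finset.sum_filter, hfe1, Finset.sum_const, nsmul_eq_mul]
    have e2 : ∑ p : (Fin n → F) × F,
        (if p ∈ E ∧ p.1 ∉ P then (if b = 0 then 0 else w * fA μ m (b - 1)) else 0)
        = ((E.filter (fun p => p.1 ∉ P)).card : ℝ) * (if b = 0 then 0 else w * fA μ m (b - 1)) := by
      rw [← Finset.sum_filter, hfe2, Finset.sum_const, nsmul_eq_mul]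
    rw [e1, e2]
    have hc1P : (E.filter (fun p => p.1 ∈ P)).card ≤ P.card := by
      apply Finset.card_le_card_of_injOn (fun p => p.1)
      · intro p hp
        exact (Finset.mem_filter.mp hp).2
      · intro p hp q hq hpq
        simp only [Finset.coe_filter, Set.mem_setOf_eq] at hp hq
        obtain ⟨hp1, hp2, Vp, hVp⟩ := (hEmem p).mp hp.1
        obtain ⟨hq1, hq2, Vq, hVq⟩ := (hEmem q).mp hq.1
        have hpq' : p.1 = q.1 := hpq
        rw [← hpq'] at hVq
        exact Prod.ext hpq' (hbe hp1 hq2 hVp hVq)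
    have hc1E : (E.filter (fun p => p.1 ∈ P)).card ≤ degU ℓ H U :=
      hEcard ▸ Finset.card_le_card (Finset.filter_subset _ _)
    have hc2E : (E.filter (fun p => p.1 ∉ P)).card ≤ degU ℓ H U :=
      hEcard ▸ Finset.card_le_card (Finset.filter_subset _ _)
    have hb1 : ((E.filter (fun p => p.1 ∈ P)).card : ℝ) * w ≤ μ := by
      rw [hμ]
      apply le_min
      · exact le_trans (mul_le_mul_of_nonneg_right (Nat.cast_le.mpr hc1E) hw0) hDw
      · calc ((E.filter (fun p => p.1 ∈ P)).card : ℝ) * w ≤ (c : ℝ) * dv⁻¹ := by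
              apply mul_le_mul _ hwd hw0 (Nat.cast_nonneg _)
              exact_mod_cast le_trans hc1P (by omega : P.card ≤ c)
          _ = (c : ℝ) / dv := (div_eq_mul_inv _ _).symm
    have hb2 : ((E.filter (fun p => p.1 ∉ P)).card : ℝ) * w ≤ 1 :=
      le_trans (mul_le_mul_of_nonneg_right (Nat.cast_le.mpr hc2E) hw0) hDw
    have hfa1 : 0 ≤ fA μ m b := fA_nonneg hμ0 m b
    have hfa2 : 0 ≤ fA μ m (b - 1) := fA_nonneg hμ0 m (b - 1)
    rw [fA]
    by_cases hb0 : b = 0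
    · rw [if_pos hb0, if_pos hb0, mul_zero, add_zero, add_zero]
      calc ((E.filter (fun p => p.1 ∈ P)).card : ℝ) * (w * fA μ m b)
          = (((E.filter (fun p => p.1 ∈ P)).card : ℝ) * w) * fA μ m b := by ring
        _ ≤ μ * fA μ m b := mul_le_mul_of_nonneg_right hb1 hfa1
    · rw [if_neg hb0, if_neg hb0]
      have t1 : ((E.filter (fun p => p.1 ∈ P)).card : ℝ) * (w * fA μ m b) ≤ μ * fA μ m b := by
        calc ((E.filter (fun p => p.1 ∈ P)).card : ℝ) * (w * fA μ m b)
            = (((E.filter (fun p => p.1 ∈ P)).card : ℝ) * w) * fA μ m b := by ring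
          _ ≤ μ * fA μ m b := mul_le_mul_of_nonneg_right hb1 hfa1
      have t2 : ((E.filter (fun p => p.1 ∉ P)).card : ℝ) * (w * fA μ m (b - 1)) ≤ fA μ m (b - 1) := by
        calc ((E.filter (fun p => p.1 ∉ P)).card : ℝ) * (w * fA μ m (b - 1))
            = (((E.filter (fun p => p.1 ∉ P)).card : ℝ) * w) * fA μ m (b - 1) := by ring
          _ ≤ 1 * fA μ m (b - 1) := mul_le_mul_of_nonneg_right hb2 hfa2
          _ = fA μ m (b - 1) := one_mul _
      linarith

section E
variable {F : Type} [Field F] [Fintype F] [DecidableEq F] {n : ℕ}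

lemma GK_nonneg {k ℓ : ℕ} (H : Finset (Fin n → F)) (hd : (0:ℝ) ≤ davg F n k ℓ H)
    (v : Fin n → F) (β : F) (U V : KIdx F n ℓ) :
    0 ≤ (GammaInv F n k ℓ H * kikAvb v β : Matrix (KIdx F n ℓ) (KIdx F n ℓ) ℝ) U V := by
  rw [GK_apply]
  apply mul_nonneg
  · exact inv_nonneg.mpr (add_nonneg (Nat.cast_nonneg _) hd)
  · split <;> norm_num

lemma image_card_le {H : Finset (Fin n → F)} {t : ℕ} (s : Fin (2 * t) → (Fin n → F) × F)
    (h1 : ∀ i, (s i).1 ∈ H ∧ (s i).2 ≠ 0)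
    (h2 : ∀ v ∈ H, ∑ i ∈ Finset.univ.filter (fun i => (s i).1 = v), (s i).2 = 0) :
    (Finset.image (fun i => (s i).1) Finset.univ).card ≤ t := by
  classical
  have hfib : ∀ v ∈ Finset.image (fun i => (s i).1) Finset.univ,
      2 ≤ (Finset.univ.filter (fun i => (s i).1 = v)).card := by
    intro v hv
    obtain ⟨i0, -, hi0⟩ := Finset.mem_image.mp hv
    have hne : i0 ∈ Finset.univ.filter (fun i => (s i).1 = v) := by simp [hi0]
    have h1c : 0 < (Finset.univ.filter (fun i => (s i).1 = v)).card :=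
      Finset.card_pos.mpr ⟨i0, hne⟩
    by_contra hlt
    push_neg at hlt
    have hcard1 : (Finset.univ.filter (fun i => (s i).1 = v)).card = 1 := by omega
    obtain ⟨i1, hi1⟩ := Finset.card_eq_one.mp hcard1
    have hsum := h2 v (hi0 ▸ (h1 i0).1)
    rw [hi1, Finset.sum_singleton] at hsum
    exact (h1 i1).2 hsum
  have htot : ∑ v ∈ Finset.image (fun i => (s i).1) Finset.univ,
      (Finset.univ.filter (fun i => (s i).1 = v)).card = 2 * t := by
    rw [← Finset.card_eq_sum_card_fiberwise
      (fun i _ => Finset.mem_image_of_mem (fun i => (s i).1) (Finset.mem_univ i))]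
    simp
  have hlow : 2 * (Finset.image (fun i => (s i).1) Finset.univ).card ≤
      ∑ v ∈ Finset.image (fun i => (s i).1) Finset.univ,
        (Finset.univ.filter (fun i => (s i).1 = v)).card := by
    calc 2 * (Finset.image (fun i => (s i).1) Finset.univ).card
        = ∑ _v ∈ Finset.image (fun i => (s i).1) Finset.univ, 2 := by
          rw [Finset.sum_const, smul_eq_mul, mul_comm]
      _ ≤ _ := Finset.sum_le_sum hfib
  omega

end E

set_option maxHeartbeats 1000000 in
/-- the total contribution of trivially closed sequences to the trace moment:
`∑_{trivially closed ((v₁,β₁),…,(v_{2t},β_{2t}))} tr(Γ⁻¹A_{v₁,β₁} ⋯ Γ⁻¹A_{v_{2t},β_{2t}})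
  ≤ N · 2^{2t} · (2t/d)^t`. -/
theorem stmt7 (F : Type) [Field F] [Fintype F] [DecidableEq F] (n k ℓ t : ℕ)
    (hk : 2 ≤ k) (hke : Even k) (h1 : (k : ℝ) / 2 ≤ (ℓ : ℝ)) (h2 : (ℓ : ℝ) ≤ (n : ℝ) / 2)
    (H : Finset (Fin n → F)) (hH : H.Nonempty)
    (hsp : ∀ v ∈ H, (fsupp v).card = k) (ht : 1 ≤ t) :
    ∑ s ∈ (Finset.univ : Finset (Fin (2 * t) → (Fin n → F) × F)).filter
        (fun s => (∀ i, (s i).1 ∈ H ∧ (s i).2 ≠ 0) ∧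
          ∀ v ∈ H, ∑ i ∈ Finset.univ.filter (fun i => (s i).1 = v), (s i).2 = 0),
      Matrix.trace
        ((List.ofFn fun i : Fin (2 * t) => GammaInv F n k ℓ H * kikAvb (s i).1 (s i).2).prod) ≤
      (((Fintype.card F - 1) ^ ℓ * n.choose ℓ : ℕ) : ℝ) * 2 ^ (2 * t) *
        (((2 * t : ℕ) : ℝ) / davg F n k ℓ H) ^ t := by
  classical
  have hkl : k ≤ 2 * ℓ := by
    have hx : (k : ℝ) ≤ 2 * (ℓ : ℝ) := by linarith
    exact_mod_cast hx
  have hln : 2 * ℓ ≤ n := by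
    have hx : 2 * (ℓ : ℝ) ≤ (n : ℝ) := by linarith
    exact_mod_cast hx
  have hd : 0 < davg F n k ℓ H := davg_pos hH hkl hln
  set μ : ℝ := min 1 (((2 * t : ℕ) : ℝ) / davg F n k ℓ H) with hμ
  have hμ0 : (0:ℝ) ≤ μ := le_min (by norm_num) (by positivity)
  have hμ1 : μ ≤ 1 := min_le_left _ _
  have hbe : ∀ {v : Fin n → F} {β β' : F} {U V V' : KIdx F n ℓ}, v ∈ H → β' ≠ 0 →
      EdgeTo v β U V → EdgeTo v β' U V' → β = β' :=
    fun hv hβ' hEe hEe' =>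
      edgeTo_beta_unique (k := k) (by omega) (hsp _ hv) hβ' hEe hEe'
  have hkey := keyLemma (H := H) (2 * t) hk hsp hd hbe (2 * t) t
  have hnn : ∀ s : Fin (2 * t) → (Fin n → F) × F,
      ∀ M ∈ (List.ofFn fun i : Fin (2 * t) => GammaInv F n k ℓ H * kikAvb (s i).1 (s i).2),
      ∀ i j, 0 ≤ M i j := by
    intro s M hM i j
    rw [List.mem_ofFn] at hM
    obtain ⟨i0, rfl⟩ := hM
    exact GK_nonneg H hd.le _ _ i j
  have step1 : ∑ s ∈ (Finset.univ : Finset (Fin (2 * t) → (Fin n → F) × F)).filter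
        (fun s => (∀ i, (s i).1 ∈ H ∧ (s i).2 ≠ 0) ∧
          ∀ v ∈ H, ∑ i ∈ Finset.univ.filter (fun i => (s i).1 = v), (s i).2 = 0),
      Matrix.trace
        ((List.ofFn fun i : Fin (2 * t) => GammaInv F n k ℓ H * kikAvb (s i).1 (s i).2).prod)
      ≤ ∑ s ∈ (Finset.univ : Finset (Fin (2 * t) → (Fin n → F) × F)).filter
        (fun s => (∀ i, (s i).1 ∈ H ∧ (s i).2 ≠ 0) ∧
          ∀ v ∈ H, ∑ i ∈ Finset.univ.filter (fun i => (s i).1 = v), (s i).2 = 0),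
        ∑ U : KIdx F n ℓ,
          PhiR (List.ofFn fun i : Fin (2 * t) =>
            GammaInv F n k ℓ H * kikAvb (s i).1 (s i).2) U := by
    apply Finset.sum_le_sum
    intro s hs
    rw [Matrix.trace]
    apply Finset.sum_le_sum
    intro U _
    rw [Matrix.diag_apply, PhiR]
    exact Finset.single_le_sum
      (fun V _ => listProd_nonneg _ (hnn s) U V) (Finset.mem_univ U)
  have step2 : ∑ s ∈ (Finset.univ : Finset (Fin (2 * t) → (Fin n → F) × F)).filter
        (fun s => (∀ i, (s i).1 ∈ H ∧ (s i).2 ≠ 0) ∧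
          ∀ v ∈ H, ∑ i ∈ Finset.univ.filter (fun i => (s i).1 = v), (s i).2 = 0),
        ∑ U : KIdx F n ℓ,
          PhiR (List.ofFn fun i : Fin (2 * t) =>
            GammaInv F n k ℓ H * kikAvb (s i).1 (s i).2) U
      ≤ ∑ _U : KIdx F n ℓ, fA μ (2 * t) t := by
    rw [Finset.sum_comm]
    apply Finset.sum_le_sum
    intro U _
    refine le_trans (Finset.sum_le_sum_of_subset_of_nonneg ?_ ?_)
      (hkey U ∅ (Finset.empty_subset H) (by simp))
    · intro s hs
      rw [Finset.mem_filter] at hs ⊢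
      refine ⟨hs.1, hs.2.1, ?_⟩
      rw [Finset.sdiff_empty]
      exact image_card_le s hs.2.1 hs.2.2
    · intro s _ _
      exact PhiR_nonneg _ (hnn s) U
  have step3 : ∑ _U : KIdx F n ℓ, fA μ (2 * t) t
      ≤ (((Fintype.card F - 1) ^ ℓ * n.choose ℓ : ℕ) : ℝ) * 2 ^ (2 * t) *
        (((2 * t : ℕ) : ℝ) / davg F n k ℓ H) ^ t := by
    rw [Finset.sum_const, Finset.card_univ, nsmul_eq_mul]
    have hN : (Fintype.card (KIdx F n ℓ) : ℝ) ≤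
        (((Fintype.card F - 1) ^ ℓ * n.choose ℓ : ℕ) : ℝ) :=
      Nat.cast_le.mpr (card_KIdx_le ℓ)
    have hfa : (0:ℝ) ≤ fA μ (2 * t) t := fA_nonneg hμ0 _ _
    have hfle : fA μ (2 * t) t ≤ 2 ^ (2 * t) * μ ^ t := by
      have hx := fA_le hμ0 hμ1 (2 * t) t
      have h2t : 2 * t - t = t := by omega
      rwa [h2t] at hx
    have hμt : μ ^ t ≤ (((2 * t : ℕ) : ℝ) / davg F n k ℓ H) ^ t :=
      pow_le_pow_left₀ hμ0 (min_le_right _ _) t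
    have hNn : (0:ℝ) ≤ (((Fintype.card F - 1) ^ ℓ * n.choose ℓ : ℕ) : ℝ) := Nat.cast_nonneg _
    calc (Fintype.card (KIdx F n ℓ) : ℝ) * fA μ (2 * t) t
        ≤ (((Fintype.card F - 1) ^ ℓ * n.choose ℓ : ℕ) : ℝ) * fA μ (2 * t) t :=
          mul_le_mul_of_nonneg_right hN hfa
      _ ≤ (((Fintype.card F - 1) ^ ℓ * n.choose ℓ : ℕ) : ℝ) * (2 ^ (2 * t) * μ ^ t) :=
          mul_le_mul_of_nonneg_left hfle hNn
      _ ≤ (((Fintype.card F - 1) ^ ℓ * n.choose ℓ : ℕ) : ℝ) *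
          (2 ^ (2 * t) * (((2 * t : ℕ) : ℝ) / davg F n k ℓ H) ^ t) := by
          apply mul_le_mul_of_nonneg_left _ hNn
          apply mul_le_mul_of_nonneg_left hμt (by positivity)
      _ = (((Fintype.card F - 1) ^ ℓ * n.choose ℓ : ℕ) : ℝ) * 2 ^ (2 * t) *
          (((2 * t : ℕ) : ℝ) / davg F n k ℓ H) ^ t := by ring
  exact le_trans step1 (le_trans step2 step3)
end

section
/- Let I = (H, (b_v)_{v∈H}) be a k-LIN(𝔽) instance in n variables with H nonempty, and let H = ⨆_{u∈U} H_u be a U-bipartite decomposition of H. Define Φ(x) = (1/(|H|·|𝔽|)) ∑_{v∈H} ∑_{β∈𝔽*} ω_p^{Tr(β·b_v)} · conj(χ_{βv}(x)). Then for every x ∈ 𝔽ⁿ, the quantity R(x) = (|U|/(|H|²·|𝔽|)) · ∑_{u∈U} ∑_{β∈𝔽*} ∑_{v,v'∈H_u} ω_p^{Tr(β·b_v)} · ω_p^{−Tr(β·b_{v'})} · conj(χ_{βv}(x)) · χ_{βv'}(x) is a nonnegative real number and |Φ(x)|² ≤ R(x). -/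
open Finset

/-- `Φ(x)`, the advantage polynomial of a `k`-LIN(𝔽) instance. -/
noncomputable def PhiPoly (p : ℕ) (F : Type) [Field F] [Fintype F] [DecidableEq F]
    [Algebra (ZMod p) F] {n : ℕ} (H : Finset (Fin n → F)) (b : (Fin n → F) → F)
    (x : Fin n → F) : ℂ :=
  (1 / ((H.card : ℂ) * (Fintype.card F : ℂ))) *
    ∑ v ∈ H, ∑ β ∈ Finset.univ.filter (fun β : F => β ≠ 0),
      omegaTr p F (β * b v) * (starRingEnd ℂ) (chiF p F (β • v) x)

/-- The right-hand side `R(x)` of the Cauchy–Schwarz trick for a `U`-bipartite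
decomposition `H = ⨆_{u∈U} part u`. -/
noncomputable def RPoly (p : ℕ) (F : Type) [Field F] [Fintype F] [DecidableEq F]
    [Algebra (ZMod p) F] {n : ℕ} (H : Finset (Fin n → F)) (b : (Fin n → F) → F)
    (U : Finset (Fin n → F)) (part : (Fin n → F) → Finset (Fin n → F))
    (x : Fin n → F) : ℂ :=
  ((U.card : ℂ) / ((H.card : ℂ) ^ 2 * (Fintype.card F : ℂ))) *
    ∑ u ∈ U, ∑ β ∈ Finset.univ.filter (fun β : F => β ≠ 0),
      ∑ v ∈ part u, ∑ v' ∈ part u,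
        omegaTr p F (β * b v) * omegaTr p F (-(β * b v')) *
          (starRingEnd ℂ) (chiF p F (β • v) x) * chiF p F (β • v') x

/-- Cauchy–Schwarz trick: for any `U`-bipartite decomposition of a
`k`-LIN(𝔽) instance, `R(x)` is a nonnegative real number and `|Φ(x)|² ≤ R(x)`. -/
theorem stmt9 (p : ℕ) [Fact p.Prime] (F : Type) [Field F] [Fintype F] [DecidableEq F]
    [CharP F p] [Algebra (ZMod p) F] (n k : ℕ)
    (H : Finset (Fin n → F)) (hH : H.Nonempty)
    (hsp : ∀ v ∈ H, (Finset.univ.filter fun i => v i ≠ 0).card = k)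
    (b : (Fin n → F) → F)
    (U : Finset (Fin n → F)) (part : (Fin n → F) → Finset (Fin n → F))
    (hcover : H = U.biUnion part)
    (hdisj : ∀ u ∈ U, ∀ u' ∈ U, u ≠ u' → Disjoint (part u) (part u'))
    (hsub : ∀ u ∈ U, ∀ v ∈ part u, ∀ i : Fin n, u i ≠ 0 → v i = u i)
    (x : Fin n → F) :
    0 ≤ (RPoly p F H b U part x).re ∧ (RPoly p F H b U part x).im = 0 ∧
      ‖PhiPoly p F H b x‖ ^ 2 ≤ (RPoly p F H b U part x).re := by
  classical
  set Fs := Finset.univ.filter (fun β : F => β ≠ 0) with hFs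
  set t : F → (Fin n → F) → ℂ := fun β v =>
    omegaTr p F (β * b v) * (starRingEnd ℂ) (chiF p F (β • v) x) with hTdef
  set S : (Fin n → F) → F → ℂ := fun u β => ∑ v ∈ part u, t β v with hSdef
  set A : ℝ := (H.card : ℝ) with hA
  set q : ℝ := (Fintype.card F : ℝ) with hq
  have hApos : (0 : ℝ) < A := by
    simp only [hA]; exact_mod_cast Finset.card_pos.mpr hH
  have hqpos : (0 : ℝ) < q := by
    simp only [hq]; exact_mod_cast Fintype.card_pos
  set T : ℝ := ∑ u ∈ U, ∑ β ∈ Fs, Complex.normSq (S u β) with hTs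
  set Cr : ℝ := (U.card : ℝ) / (A ^ 2 * q) with hCr
  have hTnn : 0 ≤ T := by
    apply Finset.sum_nonneg; intro u _
    exact Finset.sum_nonneg fun β _ => Complex.normSq_nonneg _
  have hCrnn : 0 ≤ Cr := by positivity
  -- inner double sum is |S|²
  have key : ∀ u, ∀ β, (∑ v ∈ part u, ∑ v' ∈ part u,
      omegaTr p F (β * b v) * omegaTr p F (-(β * b v')) *
        (starRingEnd ℂ) (chiF p F (β • v) x) * chiF p F (β • v') x)
      = (Complex.normSq (S u β) : ℂ) := by
    intro u β
    rw [← Complex.mul_conj, hSdef]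
    simp only
    rw [map_sum, Finset.sum_mul_sum]
    refine Finset.sum_congr rfl fun v _ => Finset.sum_congr rfl fun v' _ => ?_
    simp only [hTdef, map_mul, Complex.conj_conj, omegaTr_conj]
    ring
  -- R is a nonnegative real
  have hRP : RPoly p F H b U part x = ((Cr * T : ℝ) : ℂ) := by
    rw [RPoly]
    have h1 : (∑ u ∈ U, ∑ β ∈ Fs,
        ∑ v ∈ part u, ∑ v' ∈ part u,
          omegaTr p F (β * b v) * omegaTr p F (-(β * b v')) *
            (starRingEnd ℂ) (chiF p F (β • v) x) * chiF p F (β • v') x)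
        = ((T : ℝ) : ℂ) := by
      rw [hTs]; push_cast
      exact Finset.sum_congr rfl fun u _ => Finset.sum_congr rfl fun β _ => key u β
    rw [h1, hCr, hA, hq]
    push_cast; ring
  -- Phi in terms of S
  have hPhi : PhiPoly p F H b x
      = (1 / ((H.card : ℂ) * (Fintype.card F : ℂ))) * ∑ u ∈ U, ∑ β ∈ Fs, S u β := by
    rw [PhiPoly]
    congr 1
    rw [hcover, Finset.sum_biUnion (fun u hu u' hu' hne =>
      hdisj u (Finset.mem_coe.mp hu) u' (Finset.mem_coe.mp hu') hne)]
    exact Finset.sum_congr rfl fun u _ => Finset.sum_comm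
  set P : ℝ := ∑ u ∈ U, ∑ β ∈ Fs, ‖S u β‖ with hPdef
  have hPb : ‖∑ u ∈ U, ∑ β ∈ Fs, S u β‖ ≤ P := by
    calc ‖∑ u ∈ U, ∑ β ∈ Fs, S u β‖
        = ‖∑ u ∈ U, ∑ β ∈ Fs, S u β‖ := rfl
      _ ≤ ∑ u ∈ U, ‖∑ β ∈ Fs, S u β‖ := norm_sum_le _ _
      _ ≤ ∑ u ∈ U, ∑ β ∈ Fs, ‖S u β‖ :=
          Finset.sum_le_sum fun u _ => norm_sum_le _ _
      _ = P := rfl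
  have hPnn : 0 ≤ P := by
    apply Finset.sum_nonneg; intro u _
    exact Finset.sum_nonneg fun β _ => norm_nonneg _
  have hP2 : P ^ 2 ≤ ((U.card * Fs.card : ℕ) : ℝ) * T := by
    have hPprod : P = ∑ z ∈ U ×ˢ Fs, ‖S z.1 z.2‖ := by
      rw [hPdef, Finset.sum_product]
    have h2 := sq_sum_le_card_mul_sum_sq (s := U ×ˢ Fs)
      (f := fun z => ‖S z.1 z.2‖)
    rw [← hPprod] at h2
    have h3 : (∑ z ∈ U ×ˢ Fs, ‖S z.1 z.2‖ ^ 2) = T := by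
      rw [Finset.sum_product, hTs]
      exact Finset.sum_congr rfl fun u _ => Finset.sum_congr rfl fun β _ =>
        Complex.sq_norm _
    rw [h3, Finset.card_product] at h2
    exact_mod_cast h2
  have hconst : ‖1 / ((H.card : ℂ) * (Fintype.card F : ℂ))‖ = 1 / (A * q) := by
    rw [norm_div, norm_mul, norm_one, Complex.norm_natCast, Complex.norm_natCast, hA, hq]
  have hFsq : (Fs.card : ℝ) ≤ q := by
    rw [hq]; exact_mod_cast (Finset.card_filter_le _ _).trans_eq (Finset.card_univ)
  have hcoef : (1 / (A * q)) ^ 2 * (((U.card * Fs.card : ℕ) : ℝ)) ≤ Cr := by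
    rw [hCr]
    push_cast
    rw [div_pow, one_pow, div_mul_eq_mul_div, div_le_div_iff₀ (by positivity) (by positivity)]
    have hU : (0:ℝ) ≤ (U.card : ℝ) := by positivity
    nlinarith [mul_le_mul_of_nonneg_left hFsq hU, sq_nonneg A, hApos, hqpos,
      mul_pos hApos hqpos, mul_pos (mul_pos hApos hApos) hqpos]
  have hre : (RPoly p F H b U part x).re = Cr * T := by rw [hRP, Complex.ofReal_re]
  refine ⟨by rw [hre]; exact mul_nonneg hCrnn hTnn,
    by rw [hRP, Complex.ofReal_im], ?_⟩
  rw [hre]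
  calc ‖PhiPoly p F H b x‖ ^ 2
      = (‖1 / ((H.card : ℂ) * (Fintype.card F : ℂ))‖
          * ‖∑ u ∈ U, ∑ β ∈ Fs, S u β‖) ^ 2 := by rw [hPhi, norm_mul]
    _ = ((1 / (A * q)) * ‖∑ u ∈ U, ∑ β ∈ Fs, S u β‖) ^ 2 := by rw [hconst]
    _ ≤ ((1 / (A * q)) * P) ^ 2 := by
        apply pow_le_pow_left₀ (by positivity)
        exact mul_le_mul_of_nonneg_left hPb (by positivity)
    _ = (1 / (A * q)) ^ 2 * P ^ 2 := by ring
    _ ≤ (1 / (A * q)) ^ 2 * (((U.card * Fs.card : ℕ) : ℝ) * T) := by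
        exact mul_le_mul_of_nonneg_left hP2 (by positivity)
    _ = ((1 / (A * q)) ^ 2 * ((U.card * Fs.card : ℕ) : ℝ)) * T := by ring
    _ ≤ Cr * T := mul_le_mul_of_nonneg_right hcoef hTnn
end

section
/- Let 𝔽 be a finite field, let k, ℓ, n be positive integers with n ≥ 2, let ε ∈ (0,1], and let H be a fixed finite set of k-sparse vectors in 𝔽^ℓ with |H| ≥ 2·ℓ·log(|𝔽|·n)·ε^{−2}. Let (b_v)_{v∈H} be independent random variables, each uniform on 𝔽. Then with probability at least 1 − 1/n^{2ℓ}, max over x ∈ 𝔽^ℓ of (1/|H|)·|{v ∈ H : ⟨v,x⟩ = b_v}| is at most 1/|𝔽| + ε. -/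
open Finset

open scoped Classical

private lemma exp_cubic {ε : ℝ} (hε0 : 0 ≤ ε) (hε1 : ε ≤ 1) :
    Real.exp ε ≤ 1 + ε + ε ^ 2 / 2 + (2 / 9) * ε ^ 3 := by
  have h := Real.exp_bound' hε0 hε1 (n := 3) (by norm_num)
  have h2 : (∑ m ∈ Finset.range 3, ε ^ m / m.factorial) +
      ε ^ 3 * (3 + 1) / (Nat.factorial 3 * 3) = 1 + ε + ε ^ 2 / 2 + (2 / 9) * ε ^ 3 := by
    simp [Finset.sum_range_succ, Nat.factorial]
    ring
  calc Real.exp ε ≤ _ := h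
    _ = 1 + ε + ε ^ 2 / 2 + (2 / 9) * ε ^ 3 := by exact_mod_cast h2

private lemma keyA {p ε : ℝ} (hp0 : 0 ≤ p) (hp : p ≤ 1 / 2) (hε0 : 0 < ε) (hε1 : ε ≤ 1) :
    p * Real.exp (2 * ε) + (1 - p) ≤ Real.exp (2 * ε * p + ε ^ 2) := by
  set P : ℝ := 1 + ε + ε ^ 2 / 2 + (2 / 9) * ε ^ 3 with hPdef
  have hP : Real.exp ε ≤ P := exp_cubic hε0.le hε1
  have h2 : Real.exp (2 * ε) = Real.exp ε ^ 2 := by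
    rw [two_mul, Real.exp_add, sq]
  have hEdef : Real.exp (ε ^ 2) = Real.exp (ε ^ 2 / 2) ^ 2 := by
    rw [← Real.exp_nat_mul]; congr 1; push_cast; ring
  have hE : (1 + ε ^ 2 / 2) ^ 2 ≤ Real.exp (ε ^ 2) := by
    rw [hEdef]
    have h1 : 1 + ε ^ 2 / 2 ≤ Real.exp (ε ^ 2 / 2) := by
      linarith [Real.add_one_le_exp (ε ^ 2 / 2)]
    exact pow_le_pow_left₀ (by positivity) h1 2
  have hEp : 1 + 2 * ε * p ≤ Real.exp (2 * ε * p) := by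
    linarith [Real.add_one_le_exp (2 * ε * p)]
  have hR : (1 + 2 * ε * p) * ((1 + ε ^ 2 / 2) ^ 2) ≤ Real.exp (2 * ε * p + ε ^ 2) := by
    rw [Real.exp_add]
    exact mul_le_mul hEp hE (by positivity) (Real.exp_pos _).le
  have hL : p * Real.exp (2 * ε) ≤ p * P ^ 2 := by
    rw [h2]
    exact mul_le_mul_of_nonneg_left (pow_le_pow_left₀ (Real.exp_pos _).le hP 2) hp0
  -- endpoint inequality at p = 1/2
  have h43 : ε ^ 4 ≤ ε ^ 3 := pow_le_pow_of_le_one hε0.le hε1 (by norm_num)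
  have h65 : ε ^ 6 ≤ ε ^ 5 := pow_le_pow_of_le_one hε0.le hε1 (by norm_num)
  have hd2 : P ^ 2 + 1 ≤ 2 * (1 + ε) * ((1 + ε ^ 2 / 2) ^ 2) := by
    rw [hPdef]; nlinarith [h43, h65, pow_pos hε0 3, pow_pos hε0 5]
  have hd0 : (1 : ℝ) ≤ (1 + ε ^ 2 / 2) ^ 2 := by nlinarith [sq_nonneg ε]
  have hmain : p * P ^ 2 + (1 - p) ≤ (1 + 2 * ε * p) * (1 + ε ^ 2 / 2) ^ 2 := by
    nlinarith [mul_nonneg (by linarith : (0 : ℝ) ≤ 1 - 2 * p)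
        (by linarith : (0 : ℝ) ≤ (1 + ε ^ 2 / 2) ^ 2 - 1),
      mul_nonneg hp0
        (by linarith : (0 : ℝ) ≤ 2 * (1 + ε) * ((1 + ε ^ 2 / 2) ^ 2) - (P ^ 2 + 1))]
  calc p * Real.exp (2 * ε) + (1 - p) ≤ p * P ^ 2 + (1 - p) := by linarith [hL]
    _ ≤ (1 + 2 * ε * p) * (1 + ε ^ 2 / 2) ^ 2 := hmain
    _ ≤ Real.exp (2 * ε * p + ε ^ 2) := hR

/-- a semirandom `k`-LIN(𝔽) instance in `ℓ` variables with at least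
`2·ℓ·log(|𝔽|·n)/ε²` constraints has value at most `1/|𝔽| + ε` with probability at least
`1 − 1/n^{2ℓ}` over the independent uniform right-hand sides.  Probability is expressed
by counting in the uniform sample space of right-hand sides. -/
theorem stmt15 (F : Type) [Field F] [Fintype F] [DecidableEq F] (k ℓ n : ℕ)
    (hk : 1 ≤ k) (hl : 1 ≤ ℓ) (hn : 2 ≤ n) (ε : ℝ) (hε0 : 0 < ε) (hε1 : ε ≤ 1)
    (H : Finset (Fin ℓ → F))
    (hsp : ∀ v ∈ H, (Finset.univ.filter fun i => v i ≠ 0).card = k)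
    (hcard : 2 * (ℓ : ℝ) * Real.log ((Fintype.card F : ℝ) * (n : ℝ)) / ε ^ 2 ≤ (H.card : ℝ)) :
    (1 - 1 / (n : ℝ) ^ (2 * ℓ)) * (Fintype.card ((Fin ℓ → F) → F) : ℝ) ≤
      ((Finset.univ.filter fun b : (Fin ℓ → F) → F =>
          ∀ x : Fin ℓ → F,
            ((H.filter fun v => ∑ i, v i * x i = b v).card : ℝ) ≤
              (1 / (Fintype.card F : ℝ) + ε) * (H.card : ℝ)).card : ℝ) := by
  classical
  have hq2 : 2 ≤ Fintype.card F := Fintype.one_lt_card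
  set q : ℕ := Fintype.card F with hqdef
  set Q : ℝ := (q : ℝ) with hQdef
  have hQ2 : (2 : ℝ) ≤ Q := by rw [hQdef]; exact_mod_cast hq2
  have hQ0 : (0 : ℝ) < Q := by linarith
  set M : ℝ := (H.card : ℝ) with hMdef
  have hM0 : (0 : ℝ) ≤ M := Nat.cast_nonneg _
  set N : ℕ := Fintype.card (Fin ℓ → F) with hNdef
  have hmN : H.card ≤ N := by simpa [hNdef] using Finset.card_le_univ H
  have hn1 : (1 : ℝ) ≤ (n : ℝ) := by exact_mod_cast Nat.one_le_of_lt hn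
  have hnpow0 : (0 : ℝ) < (n : ℝ) ^ (2 * ℓ) := by positivity
  -- per-x Chernoff bound
  set Bad : (Fin ℓ → F) → Finset ((Fin ℓ → F) → F) := fun x =>
    univ.filter fun b : (Fin ℓ → F) → F =>
      ¬ ((H.filter fun v => ∑ i, v i * x i = b v).card : ℝ) ≤ (1 / Q + ε) * M with hBaddef
  have perx : ∀ x : Fin ℓ → F,
      ((Bad x).card : ℝ) ≤ Real.exp (-(ε ^ 2) * M) * Q ^ N := by
    intro x
    set c : (Fin ℓ → F) → F := fun v => ∑ i, v i * x i with hc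
    set e : ℝ := Real.exp (2 * ε) with he
    have he0 : (0 : ℝ) < e := Real.exp_pos _
    have he1 : (1 : ℝ) ≤ e := by
      rw [he]; linarith [Real.add_one_le_exp (2 * ε)]
    -- the moment sum
    have key : ∑ b : (Fin ℓ → F) → F, ∏ v : Fin ℓ → F,
          (if v ∈ H ∧ c v = b v then e else 1)
        = (e + (Q - 1)) ^ H.card * Q ^ (N - H.card) := by
      rw [← Fintype.prod_sum (fun v y => if v ∈ H ∧ c v = y then e else 1)]
      have hterm : ∀ v : Fin ℓ → F,
          (∑ y : F, if v ∈ H ∧ c v = y then e else 1)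
            = if v ∈ H then e + (Q - 1) else Q := by
        intro v
        by_cases hv : v ∈ H
        · simp only [hv, true_and, if_true]
          have h1 : ∀ y : F, (if c v = y then e else 1)
              = (if c v = y then e - 1 else 0) + 1 := by
            intro y; split <;> ring
          rw [Finset.sum_congr rfl fun y _ => h1 y, Finset.sum_add_distrib,
            Finset.sum_ite_eq univ (c v) fun _ => e - 1]
          simp [Finset.card_univ, hqdef]
          ring
        · simp only [hv, false_and, if_false]
          simp [Finset.card_univ, hqdef]
          rfl
      rw [Finset.prod_congr rfl fun v _ => hterm v, Finset.prod_ite _ _]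
      have hfil1 : (univ.filter fun v : Fin ℓ → F => v ∈ H) = H := by
        ext v; simp
      have hfil2 : (univ.filter fun v : Fin ℓ → F => ¬ v ∈ H) = Hᶜ := by
        ext v; simp
      rw [hfil1, hfil2, Finset.prod_const, Finset.prod_const, Finset.card_compl]
    -- each summand is exp(2 ε S b)
    have point : ∀ b : (Fin ℓ → F) → F,
        (∏ v : Fin ℓ → F, (if v ∈ H ∧ c v = b v then e else 1))
          = Real.exp (2 * ε * ((H.filter fun v => c v = b v).card : ℕ)) := by
      intro b
      rw [Finset.prod_ite _ _, Finset.prod_const, Finset.prod_const, one_pow, mul_one]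
      have hfil : (univ.filter fun v : Fin ℓ → F => v ∈ H ∧ c v = b v)
          = H.filter fun v => c v = b v := by
        ext v; simp [Finset.mem_filter, and_assoc]
      rw [hfil, he, ← Real.exp_nat_mul, mul_comm]
    -- Chernoff step
    have hT0 : (0 : ℝ) < Real.exp (2 * ε * ((1 / Q + ε) * M)) := Real.exp_pos _
    have step1 : ((Bad x).card : ℝ) * Real.exp (2 * ε * ((1 / Q + ε) * M))
        ≤ ∑ b : (Fin ℓ → F) → F,
            Real.exp (2 * ε * ((H.filter fun v => c v = b v).card : ℕ)) := by
      have h1 : ∀ b ∈ Bad x, Real.exp (2 * ε * ((1 / Q + ε) * M))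
          ≤ Real.exp (2 * ε * ((H.filter fun v => c v = b v).card : ℕ)) := by
        intro b hb
        rw [hBaddef, Finset.mem_filter] at hb
        have hb2 := hb.2
        push_neg at hb2
        exact Real.exp_le_exp.2 (by nlinarith [hb2, hε0])
      calc ((Bad x).card : ℝ) * Real.exp (2 * ε * ((1 / Q + ε) * M))
          = (Bad x).card • Real.exp (2 * ε * ((1 / Q + ε) * M)) := by
            rw [nsmul_eq_mul]
        _ ≤ ∑ b ∈ Bad x, Real.exp (2 * ε * ((H.filter fun v => c v = b v).card : ℕ)) :=
            Finset.card_nsmul_le_sum _ _ _ h1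
        _ ≤ ∑ b : (Fin ℓ → F) → F,
              Real.exp (2 * ε * ((H.filter fun v => c v = b v).card : ℕ)) :=
            Finset.sum_le_sum_of_subset_of_nonneg (Finset.subset_univ _)
              (fun _ _ _ => (Real.exp_pos _).le)
    have total : ∑ b : (Fin ℓ → F) → F,
        Real.exp (2 * ε * ((H.filter fun v => c v = b v).card : ℕ))
          = (e + (Q - 1)) ^ H.card * Q ^ (N - H.card) := by
      rw [← key]
      exact Finset.sum_congr rfl fun b _ => (point b).symm
    -- bound the base
    have hbase : e + (Q - 1) ≤ Q * Real.exp (2 * ε * (1 / Q) + ε ^ 2) := by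
      have hA := keyA (p := 1 / Q) (by positivity)
        (by rw [div_le_div_iff₀ hQ0 (by norm_num : (0:ℝ) < 2)]; linarith) hε0 hε1
      have := mul_le_mul_of_nonneg_left hA hQ0.le
      calc e + (Q - 1) = Q * (1 / Q * e + (1 - 1 / Q)) := by
            field_simp
        _ ≤ Q * Real.exp (2 * ε * (1 / Q) + ε ^ 2) := this
    have hbase0 : (0 : ℝ) ≤ e + (Q - 1) := by linarith
    have hpow : (e + (Q - 1)) ^ H.card
        ≤ Q ^ H.card * Real.exp ((H.card : ℝ) * (2 * ε * (1 / Q) + ε ^ 2)) := by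
      calc (e + (Q - 1)) ^ H.card
          ≤ (Q * Real.exp (2 * ε * (1 / Q) + ε ^ 2)) ^ H.card :=
            pow_le_pow_left₀ hbase0 hbase _
        _ = Q ^ H.card * Real.exp ((H.card : ℝ) * (2 * ε * (1 / Q) + ε ^ 2)) := by
            rw [mul_pow, ← Real.exp_nat_mul]
    -- combine
    have hQQ : Q ^ H.card * Q ^ (N - H.card) = Q ^ N := by
      rw [← pow_add, Nat.add_sub_cancel' hmN]
    have hexpsplit : Real.exp ((H.card : ℝ) * (2 * ε * (1 / Q) + ε ^ 2))
        = Real.exp (-(ε ^ 2) * M) * Real.exp (2 * ε * ((1 / Q + ε) * M)) := by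
      rw [← Real.exp_add]
      congr 1
      rw [hMdef]
      ring
    have final : ((Bad x).card : ℝ) * Real.exp (2 * ε * ((1 / Q + ε) * M))
        ≤ (Real.exp (-(ε ^ 2) * M) * Q ^ N) * Real.exp (2 * ε * ((1 / Q + ε) * M)) := by
      calc ((Bad x).card : ℝ) * Real.exp (2 * ε * ((1 / Q + ε) * M))
          ≤ (e + (Q - 1)) ^ H.card * Q ^ (N - H.card) := by rw [← total]; exact step1
        _ ≤ (Q ^ H.card * Real.exp ((H.card : ℝ) * (2 * ε * (1 / Q) + ε ^ 2)))
              * Q ^ (N - H.card) :=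
            mul_le_mul_of_nonneg_right hpow (by positivity)
        _ = (Real.exp (-(ε ^ 2) * M) * Q ^ N) * Real.exp (2 * ε * ((1 / Q + ε) * M)) := by
            rw [hexpsplit, ← hQQ]; ring
    exact le_of_mul_le_mul_right final hT0
  -- bound exp(-ε² M) by (Q n)^{-2ℓ}
  have hQn0 : (0 : ℝ) < Q * (n : ℝ) := by positivity
  have expM : Real.exp (-(ε ^ 2) * M) ≤ ((Q * (n : ℝ)) ^ (2 * ℓ))⁻¹ := by
    have hε2 : (0 : ℝ) < ε ^ 2 := by positivity
    have hlog : 2 * (ℓ : ℝ) * Real.log (Q * (n : ℝ)) ≤ ε ^ 2 * M := by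
      have h1 : 2 * (ℓ : ℝ) * Real.log (Q * (n : ℝ))
          = (2 * (ℓ : ℝ) * Real.log (Q * (n : ℝ)) / ε ^ 2) * ε ^ 2 := by
        field_simp
      rw [h1]
      calc (2 * (ℓ : ℝ) * Real.log (Q * (n : ℝ)) / ε ^ 2) * ε ^ 2
          ≤ M * ε ^ 2 := mul_le_mul_of_nonneg_right hcard hε2.le
        _ = ε ^ 2 * M := mul_comm _ _
    calc Real.exp (-(ε ^ 2) * M)
        ≤ Real.exp (-(2 * (ℓ : ℝ) * Real.log (Q * (n : ℝ)))) :=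
          Real.exp_le_exp.2 (by linarith)
      _ = ((Q * (n : ℝ)) ^ (2 * ℓ))⁻¹ := by
          rw [show -(2 * (ℓ : ℝ) * Real.log (Q * (n : ℝ)))
              = ((2 * ℓ : ℕ) : ℝ) * (-Real.log (Q * (n : ℝ))) by push_cast; ring,
            Real.exp_nat_mul, Real.exp_neg, Real.exp_log hQn0, inv_pow]
  -- union bound
  set G : Finset ((Fin ℓ → F) → F) :=
    univ.filter fun b : (Fin ℓ → F) → F =>
      ∀ x : Fin ℓ → F,
        ((H.filter fun v => ∑ i, v i * x i = b v).card : ℝ) ≤ (1 / Q + ε) * M with hGdef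
  set Gc : Finset ((Fin ℓ → F) → F) :=
    univ.filter fun b : (Fin ℓ → F) → F =>
      ¬ ∀ x : Fin ℓ → F,
        ((H.filter fun v => ∑ i, v i * x i = b v).card : ℝ) ≤ (1 / Q + ε) * M with hGcdef
  have hsubset : Gc ⊆ univ.biUnion Bad := by
    intro b hb
    rw [hGcdef, Finset.mem_filter] at hb
    obtain ⟨x, hx⟩ := not_forall.mp hb.2
    exact Finset.mem_biUnion.2 ⟨x, Finset.mem_univ x,
      Finset.mem_filter.2 ⟨Finset.mem_univ b, hx⟩⟩
  have hcardF : Fintype.card (Fin ℓ → F) = q ^ ℓ := by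
    rw [Fintype.card_fun, Fintype.card_fin]
  have hGc : (Gc.card : ℝ) ≤ (q ^ ℓ : ℝ) * (Real.exp (-(ε ^ 2) * M) * Q ^ N) := by
    calc (Gc.card : ℝ) ≤ ((univ.biUnion Bad).card : ℝ) := by
          exact_mod_cast Finset.card_le_card hsubset
      _ ≤ ((∑ x : Fin ℓ → F, (Bad x).card : ℕ) : ℝ) := by
          exact_mod_cast Finset.card_biUnion_le
      _ = ∑ x : Fin ℓ → F, ((Bad x).card : ℝ) := by push_cast; rfl
      _ ≤ ∑ _x : Fin ℓ → F, Real.exp (-(ε ^ 2) * M) * Q ^ N :=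
          Finset.sum_le_sum fun x _ => perx x
      _ = (q ^ ℓ : ℝ) * (Real.exp (-(ε ^ 2) * M) * Q ^ N) := by
          rw [Finset.sum_const, Finset.card_univ, hcardF, nsmul_eq_mul]; push_cast; ring
  have hstep : (q ^ ℓ : ℝ) * (Real.exp (-(ε ^ 2) * M) * Q ^ N)
      ≤ Q ^ N / (n : ℝ) ^ (2 * ℓ) := by
    have h1 : (q ^ ℓ : ℝ) * (Real.exp (-(ε ^ 2) * M) * Q ^ N)
        ≤ Q ^ ℓ * (((Q * (n : ℝ)) ^ (2 * ℓ))⁻¹ * Q ^ N) := by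
      exact mul_le_mul_of_nonneg_left
        (mul_le_mul_of_nonneg_right expM (by positivity)) (by positivity)
    have h2 : Q ^ ℓ * ((Q * (n : ℝ)) ^ (2 * ℓ))⁻¹ ≤ ((n : ℝ) ^ (2 * ℓ))⁻¹ := by
      rw [mul_pow]
      have hQl : Q ^ ℓ ≤ Q ^ (2 * ℓ) :=
        pow_le_pow_right₀ (by linarith) (by omega)
      rw [mul_inv, ← mul_assoc]
      have h3 : Q ^ ℓ * (Q ^ (2 * ℓ))⁻¹ ≤ 1 := by
        rw [← div_eq_mul_inv, div_le_one (by positivity)]; exact hQl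
      calc Q ^ ℓ * (Q ^ (2 * ℓ))⁻¹ * ((n : ℝ) ^ (2 * ℓ))⁻¹
          ≤ 1 * ((n : ℝ) ^ (2 * ℓ))⁻¹ :=
            mul_le_mul_of_nonneg_right h3 (by positivity)
        _ = ((n : ℝ) ^ (2 * ℓ))⁻¹ := one_mul _
    calc (q ^ ℓ : ℝ) * (Real.exp (-(ε ^ 2) * M) * Q ^ N)
        ≤ Q ^ ℓ * (((Q * (n : ℝ)) ^ (2 * ℓ))⁻¹ * Q ^ N) := h1
      _ = (Q ^ ℓ * ((Q * (n : ℝ)) ^ (2 * ℓ))⁻¹) * Q ^ N := by ring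
      _ ≤ ((n : ℝ) ^ (2 * ℓ))⁻¹ * Q ^ N :=
          mul_le_mul_of_nonneg_right h2 (by positivity)
      _ = Q ^ N / (n : ℝ) ^ (2 * ℓ) := by rw [div_eq_mul_inv]; ring
  -- assemble
  have hspace : (Fintype.card ((Fin ℓ → F) → F) : ℝ) = Q ^ N := by
    rw [Fintype.card_fun]
    push_cast
    rfl
  have hpartition : G.card + Gc.card = Fintype.card ((Fin ℓ → F) → F) := by
    rw [hGdef, hGcdef]
    rw [Finset.card_filter_add_card_filter_not]
    exact Finset.card_univ
  have hpartR : (G.card : ℝ) + (Gc.card : ℝ) = Q ^ N := by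
    rw [← hspace]; exact_mod_cast hpartition
  have hGcfinal : (Gc.card : ℝ) ≤ Q ^ N / (n : ℝ) ^ (2 * ℓ) := le_trans hGc hstep
  have hgoalrw : (1 - 1 / (n : ℝ) ^ (2 * ℓ)) * (Q ^ N)
      = Q ^ N - Q ^ N / (n : ℝ) ^ (2 * ℓ) := by
    field_simp
  show (1 - 1 / (n : ℝ) ^ (2 * ℓ)) * (Fintype.card ((Fin ℓ → F) → F) : ℝ) ≤ (G.card : ℝ)
  rw [hspace, hgoalrw]
  linarith
end

section
/- There is an absolute constant c ∈ (0,1) (one may take c = 1/e) such that the following holds for every finite field 𝔽, all integers 1 ≤ k ≤ ℓ ≤ n with n ≥ 2, every ε ∈ (0,1], every real C ≥ 16, and every subset S ⊆ [n] with |S| = ℓ: if v₁, …, v_m are independent random vectors, each uniformly distributed on the set of k-sparse vectors in 𝔽ⁿ, and m ≥ c^{−k} · C · n · (n/ℓ)^(k−1) · log(n) · ε^{−2}, then with probability at least 1 − 1/n^{2ℓ}, |{j ∈ [m] : supp(v_j) ⊆ S}| ≥ (C/2) · ℓ · log(n) · ε^{−2}. -/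
open Finset

open scoped Classical

lemma pow_le_pow_mul_choose : ∀ k ℓ : ℕ, k ≤ ℓ → ℓ ^ k ≤ k ^ k * ℓ.choose k := by
  intro k
  induction k with
  | zero => intro ℓ _; simp
  | succ k ih =>
    intro ℓ hk
    obtain ⟨l, rfl⟩ : ∃ l, ℓ = l + 1 := ⟨ℓ - 1, by omega⟩
    have hkl : k ≤ l := by omega
    have hkk : 0 < k ^ k := by
      cases k with
      | zero => simp
      | succ k => positivity
    apply Nat.le_of_mul_le_mul_right _ hkk
    have key : (l + 1) * k ≤ (k + 1) * l := by nlinarith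
    have hs : (l + 1) * l.choose k = (l + 1).choose (k + 1) * (k + 1) := by
      have := Nat.add_one_mul_choose_eq l k
      simpa [Nat.succ_eq_add_one] using this
    calc (l + 1) ^ (k + 1) * k ^ k
        = (l + 1) * ((l + 1) * k) ^ k := by rw [mul_pow]; ring
      _ ≤ (l + 1) * ((k + 1) * l) ^ k :=
          Nat.mul_le_mul_left _ (Nat.pow_le_pow_left key k)
      _ = (k + 1) ^ k * ((l + 1) * l ^ k) := by rw [mul_pow]; ring
      _ ≤ (k + 1) ^ k * ((l + 1) * (k ^ k * l.choose k)) :=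
          Nat.mul_le_mul_left _ (Nat.mul_le_mul_left _ (ih l hkl))
      _ = (k + 1) ^ k * ((l + 1) * l.choose k) * k ^ k := by ring
      _ = (k + 1) ^ k * ((l + 1).choose (k + 1) * (k + 1)) * k ^ k := by rw [hs]
      _ = (k + 1) ^ (k + 1) * (l + 1).choose (k + 1) * k ^ k := by ring

lemma card_fsupp_eq {F : Type} [Field F] [Fintype F] [DecidableEq F] {n : ℕ}
    (T : Finset (Fin n)) :
    ((univ : Finset (Fin n → F)).filter fun v => fsupp v = T).card
      = (Fintype.card F - 1) ^ T.card := by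
  have h : ((univ : Finset (Fin n → F)).filter fun v => fsupp v = T)
      = Fintype.piFinset (fun i => if i ∈ T then (univ : Finset F).erase 0 else {0}) := by
    ext v
    simp only [mem_filter, mem_univ, true_and, Fintype.mem_piFinset, Finset.ext_iff, fsupp]
    constructor
    · intro hv i
      have := hv i
      by_cases h : i ∈ T <;> simp [h] at this ⊢ <;> simp_all
    · intro hv i
      have := hv i
      by_cases h : i ∈ T <;> simp [h] at this ⊢ <;> simp_all
  rw [h, Fintype.card_piFinset]
  have : ∀ i : Fin n, (if i ∈ T then (univ : Finset F).erase 0 else {0}).card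
      = if i ∈ T then Fintype.card F - 1 else 1 := by
    intro i
    by_cases h : i ∈ T <;> simp [h, Finset.card_erase_of_mem, Finset.card_univ]
  rw [Finset.prod_congr rfl fun i _ => this i, Finset.prod_ite, Finset.prod_const,
    Finset.prod_const, one_pow, mul_one]
  congr 1
  simp [Finset.filter_mem_eq_inter]

lemma card_sparse {F : Type} [Field F] [Fintype F] [DecidableEq F] {n : ℕ}
    (k : ℕ) (R : Finset (Fin n)) :
    ((univ : Finset (Fin n → F)).filter fun v => (fsupp v).card = k ∧ fsupp v ⊆ R).card
      = (Fintype.card F - 1) ^ k * R.card.choose k := by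
  have h : ((univ : Finset (Fin n → F)).filter fun v => (fsupp v).card = k ∧ fsupp v ⊆ R)
      = (R.powersetCard k).biUnion fun T => univ.filter fun v => fsupp v = T := by
    ext v
    simp only [mem_filter, mem_univ, true_and, mem_biUnion, mem_powersetCard]
    constructor
    · rintro ⟨h1, h2⟩; exact ⟨fsupp v, ⟨h2, h1⟩, rfl⟩
    · rintro ⟨T, ⟨hT1, hT2⟩, rfl⟩; exact ⟨hT2, hT1⟩
  rw [h, card_biUnion]
  · rw [Finset.sum_congr rfl fun T hT => card_fsupp_eq T]
    rw [Finset.sum_congr rfl fun T hT => by rw [(mem_powersetCard.mp hT).2]]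
    simp [Finset.card_powersetCard, mul_comm]
  · intro T hT T' hT' hne
    refine Finset.disjoint_left.mpr fun v hv hv' => hne ?_
    simp only [mem_filter] at hv hv'
    rw [← hv.2, hv'.2]

set_option maxHeartbeats 1000000 in
/-- for i.i.d. uniform `k`-sparse vectors `v₁,…,v_m` in `Fⁿ` with
`m ≥ c^{−k}·C·n·(n/ℓ)^{k−1}·log n/ε²`, with probability at least `1 − 1/n^{2ℓ}` at least
`(C/2)·ℓ·log n/ε²` of them are supported inside a fixed set `S` of size `ℓ`.
Probability is expressed by counting in the uniform sample space of `k`-sparse tuples. -/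
theorem stmt16 :
    ∃ c : ℝ, 0 < c ∧ c < 1 ∧
      ∀ (F : Type) [Field F] [Fintype F] [DecidableEq F] (n k ℓ m : ℕ) (ε Cr : ℝ)
        (S : Finset (Fin n)),
        1 ≤ k → k ≤ ℓ → ℓ ≤ n → 2 ≤ n → 0 < ε → ε ≤ 1 → 16 ≤ Cr → S.card = ℓ →
        c⁻¹ ^ k * Cr * (n : ℝ) * ((n : ℝ) / (ℓ : ℝ)) ^ (k - 1) * Real.log (n : ℝ) / ε ^ 2 ≤
            (m : ℝ) →
        (1 - 1 / (n : ℝ) ^ (2 * ℓ)) *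
            ((((Finset.univ : Finset (Fin m → Fin n → F)).filter
              fun vs => ∀ j, (fsupp (vs j)).card = k).card : ℝ)) ≤
          (((((Finset.univ : Finset (Fin m → Fin n → F)).filter
                fun vs => ∀ j, (fsupp (vs j)).card = k).filter
              fun vs => (Cr / 2) * (ℓ : ℝ) * Real.log (n : ℝ) / ε ^ 2 ≤
                ((Finset.univ.filter fun j : Fin m => fsupp (vs j) ⊆ S).card : ℝ)).card : ℝ)) := by
  refine ⟨(Real.exp 1)⁻¹, by positivity, ?_, ?_⟩
  · rw [inv_lt_one_iff₀]
    right
    exact Real.one_lt_exp_iff.mpr one_pos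
  intro F _ _ _ n k ℓ m ε Cr S hk1 hkl hln hn2 hε0 hε1 hCr hS hm
  -- basic facts
  have hℓ1 : 1 ≤ ℓ := hk1.trans hkl
  have hn0 : (0:ℝ) < n := by exact_mod_cast Nat.lt_of_lt_of_le (by norm_num) hn2
  have hℓ0 : (0:ℝ) < ℓ := by exact_mod_cast hℓ1
  have hlogn : 0 < Real.log n := Real.log_pos (by exact_mod_cast hn2)
  have hq : 2 ≤ Fintype.card F := Fintype.one_lt_card
  set q1 := Fintype.card F - 1 with hq1def
  have hq1 : 1 ≤ q1 := by omega
  -- the basic sets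
  set A := (univ : Finset (Fin n → F)).filter (fun v => (fsupp v).card = k) with hA
  set G := (univ : Finset (Fin n → F)).filter
      (fun v => (fsupp v).card = k ∧ fsupp v ⊆ S) with hG
  have cardA : A.card = q1 ^ k * n.choose k := by
    have h1 : A = (univ : Finset (Fin n → F)).filter
        (fun v => (fsupp v).card = k ∧ fsupp v ⊆ (univ : Finset (Fin n))) := by
      rw [hA]
      exact Finset.filter_congr fun v _ => by simp [Finset.subset_univ]
    rw [h1, card_sparse]
    simp [hq1def]
  have cardG : G.card = q1 ^ k * ℓ.choose k := by rw [hG, card_sparse, hS]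
  have hGA : G ⊆ A := by
    intro v hv
    rw [hG, mem_filter] at hv
    rw [hA, mem_filter]
    exact ⟨hv.1, hv.2.1⟩
  -- real quantities
  set a : ℝ := (A.card : ℝ) with ha_def
  set g : ℝ := (G.card : ℝ) with hg_def
  have hkn : k ≤ n := hkl.trans hln
  have ha : (0:ℝ) < a := by
    rw [ha_def, cardA]
    have := Nat.choose_pos hkn
    positivity
  have hg : (0:ℝ) < g := by
    rw [hg_def, cardG]
    have := Nat.choose_pos hkl
    positivity
  have hga : g ≤ a := by
    rw [ha_def, hg_def]
    exact_mod_cast Finset.card_le_card hGA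
  set p : ℝ := g / a with hp_def
  have hp0 : 0 < p := by positivity
  have hp1 : p ≤ 1 := by rw [hp_def, div_le_one ha]; exact hga
  -- lower bound on p
  have hpeq : p = (ℓ.choose k : ℝ) / (n.choose k : ℝ) := by
    rw [hp_def, ha_def, hg_def, cardA, cardG]
    push_cast
    rw [mul_div_mul_left _ _ (by positivity : ((q1:ℝ)) ^ k ≠ 0)]
  have hcn : (0:ℝ) < (n.choose k : ℝ) := by exact_mod_cast Nat.choose_pos hkn
  have hkey : (ℓ:ℝ) ^ k * (n.choose k : ℝ) ≤
      Real.exp k * ((n:ℝ) ^ k * (ℓ.choose k : ℝ)) := by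
    have h1 : (n.choose k : ℝ) ≤ (n:ℝ) ^ k / (k.factorial : ℝ) := by
      have := Nat.choose_le_pow_div (α := ℝ) k n
      push_cast at this ⊢
      exact this
    have h2 : (ℓ:ℝ) ^ k ≤ (k:ℝ) ^ k * (ℓ.choose k : ℝ) := by
      exact_mod_cast pow_le_pow_mul_choose k ℓ hkl
    have h3 : (k:ℝ) ^ k / (k.factorial : ℝ) ≤ Real.exp k :=
      Real.pow_div_factorial_le_exp (x := (k:ℝ)) (Nat.cast_nonneg k) k
    calc (ℓ:ℝ) ^ k * (n.choose k : ℝ)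
        ≤ (ℓ:ℝ) ^ k * ((n:ℝ) ^ k / (k.factorial : ℝ)) := by
          apply mul_le_mul_of_nonneg_left h1 (by positivity)
      _ ≤ ((k:ℝ) ^ k * (ℓ.choose k : ℝ)) * ((n:ℝ) ^ k / (k.factorial : ℝ)) := by
          apply mul_le_mul_of_nonneg_right h2 (by positivity)
      _ = ((k:ℝ) ^ k / (k.factorial : ℝ)) * ((n:ℝ) ^ k * (ℓ.choose k : ℝ)) := by ring
      _ ≤ Real.exp k * ((n:ℝ) ^ k * (ℓ.choose k : ℝ)) := by
          apply mul_le_mul_of_nonneg_right h3 (by positivity)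
  have hplb : Real.exp (-(k:ℝ)) * ((ℓ:ℝ) / n) ^ k ≤ p := by
    rw [hpeq, le_div_iff₀ hcn]
    have hek : (0:ℝ) < Real.exp (k:ℝ) := Real.exp_pos _
    have hnk : (0:ℝ) < (n:ℝ) ^ k := by positivity
    have heq : Real.exp (-(k:ℝ)) * ((ℓ:ℝ) / n) ^ k * (n.choose k : ℝ)
        = ((ℓ:ℝ) ^ k * (n.choose k : ℝ)) / (Real.exp (k:ℝ) * (n:ℝ) ^ k) := by
      rw [Real.exp_neg, div_pow]
      field_simp
    rw [heq, div_le_iff₀ (by positivity)]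
    calc (ℓ:ℝ) ^ k * (n.choose k : ℝ)
        ≤ Real.exp k * ((n:ℝ) ^ k * (ℓ.choose k : ℝ)) := hkey
      _ = (ℓ.choose k : ℝ) * (Real.exp (k:ℝ) * (n:ℝ) ^ k) := by ring
  -- expected count lower bound
  have hmM : Real.exp (k:ℝ) * Cr * n * ((n:ℝ)/ℓ)^(k-1) * Real.log n / ε^2 ≤ m := by
    have he : ((Real.exp 1)⁻¹)⁻¹ ^ k = Real.exp (k:ℝ) := by
      rw [inv_inv, Real.exp_one_pow]
    rwa [he] at hm
  set μ := Cr * ℓ * Real.log n / ε^2 with hμdef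
  have hμpm : μ ≤ p * m := by
    have hM0 : (0:ℝ) ≤ Real.exp (k:ℝ) * Cr * n * ((n:ℝ)/ℓ)^(k-1) * Real.log n / ε^2 := by
      positivity
    have hstep1 : p * (Real.exp (k:ℝ) * Cr * n * ((n:ℝ)/ℓ)^(k-1) * Real.log n / ε^2) ≤ p * m :=
      mul_le_mul_of_nonneg_left hmM hp0.le
    have hstep2 : (Real.exp (-(k:ℝ)) * ((ℓ:ℝ)/n)^k) *
        (Real.exp (k:ℝ) * Cr * n * ((n:ℝ)/ℓ)^(k-1) * Real.log n / ε^2)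
        ≤ p * (Real.exp (k:ℝ) * Cr * n * ((n:ℝ)/ℓ)^(k-1) * Real.log n / ε^2) :=
      mul_le_mul_of_nonneg_right hplb hM0
    have hcomp : (Real.exp (-(k:ℝ)) * ((ℓ:ℝ)/n)^k) *
        (Real.exp (k:ℝ) * Cr * n * ((n:ℝ)/ℓ)^(k-1) * Real.log n / ε^2) = μ := by
      obtain ⟨e, rfl⟩ : ∃ e, k = e + 1 := ⟨k-1, by omega⟩
      have h11 : ((ℓ:ℝ)/n)^e * ((n:ℝ)/ℓ)^e = 1 := by
        rw [← mul_pow, div_mul_div_comm, mul_comm (ℓ:ℝ) (n:ℝ), div_self (by positivity), one_pow]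
      have hexp : Real.exp (-((e:ℝ)+1)) * Real.exp ((e:ℝ)+1) = 1 := by
        rw [← Real.exp_add, ← Real.exp_zero]; congr 1; push_cast; ring
      have hln' : (ℓ:ℝ)/n * n = ℓ := by field_simp
      simp only [Nat.add_sub_cancel]
      have hee : Real.exp (-((e+1:ℕ):ℝ)) * Real.exp ((e+1:ℕ):ℝ) = 1 := by
        rw [← Real.exp_add, ← Real.exp_zero]; congr 1; push_cast; ring
      calc (Real.exp (-((e+1:ℕ):ℝ)) * ((ℓ:ℝ)/n)^(e+1)) *
          (Real.exp ((e+1:ℕ):ℝ) * Cr * n * ((n:ℝ)/ℓ)^e * Real.log n / ε^2)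
          = (Real.exp (-((e+1:ℕ):ℝ)) * Real.exp ((e+1:ℕ):ℝ)) * (((ℓ:ℝ)/n)^e * ((n:ℝ)/ℓ)^e) *
            (((ℓ:ℝ)/n) * n) * Cr * Real.log n / ε^2 := by
            rw [pow_succ]
            ring
        _ = μ := by rw [hee, h11, hln', hμdef]; ring
    linarith
  -- the sample space
  set t := Cr / 2 * (ℓ:ℝ) * Real.log (n:ℝ) / ε ^ 2 with htdef
  set Ω := (univ : Finset (Fin m → Fin n → F)).filter
      (fun vs => ∀ j, (fsupp (vs j)).card = k) with hΩ
  have hΩpi : Ω = Fintype.piFinset (fun _ : Fin m => A) := by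
    ext vs
    simp [hΩ, hA, Fintype.mem_piFinset]
  have cardΩ : Ω.card = A.card ^ m := by
    rw [hΩpi, Fintype.card_piFinset]
    simp
  have hsplit := Finset.card_filter_add_card_filter_not (s := Ω)
    (p := fun vs => t ≤ ((univ.filter fun j : Fin m => fsupp (vs j) ⊆ S).card : ℝ))
  set Bad := Ω.filter
      (fun vs => ¬ t ≤ ((univ.filter fun j : Fin m => fsupp (vs j) ⊆ S).card : ℝ)) with hBad
  -- weight identities
  have hprodw : ∀ vs : Fin m → Fin n → F,
      ((2:ℝ)⁻¹) ^ ((univ.filter fun j : Fin m => fsupp (vs j) ⊆ S).card)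
        = ∏ j : Fin m, (if fsupp (vs j) ⊆ S then (2:ℝ)⁻¹ else 1) := by
    intro vs
    rw [Finset.prod_ite, Finset.prod_const, Finset.prod_const, one_pow, mul_one]
  have hsumw : ∑ vs ∈ Ω, ∏ j : Fin m, (if fsupp (vs j) ⊆ S then (2:ℝ)⁻¹ else 1)
      = (a - g / 2) ^ m := by
    have hsp := Finset.sum_pow' A (fun v => if fsupp v ⊆ S then (2:ℝ)⁻¹ else 1) m
    rw [hΩpi, ← hsp]
    congr 1
    rw [Finset.sum_ite, Finset.sum_const, Finset.sum_const]
    have h1 : A.filter (fun v => fsupp v ⊆ S) = G := by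
      rw [hA, hG, Finset.filter_filter]
    have h2 := Finset.card_filter_add_card_filter_not (s := A)
      (p := fun v => fsupp v ⊆ S)
    rw [h1] at h2 ⊢
    have h2' : (G.card : ℝ) + ((A.filter (fun v => ¬ fsupp v ⊆ S)).card : ℝ)
        = (A.card : ℝ) := by exact_mod_cast h2
    have h3 : ((A.filter (fun v => ¬ fsupp v ⊆ S)).card : ℝ) = a - g := by
      rw [ha_def, hg_def]; linarith
    rw [nsmul_eq_mul, nsmul_eq_mul, h3]
    have hgg : (G.card : ℝ) = g := hg_def.symm
    rw [hgg]
    ring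
  -- bound on the bad count
  have hbadle : (Bad.card : ℝ) ≤ (2:ℝ) ^ t * (a - g/2) ^ m := by
    have hterm : ∀ vs ∈ Bad, (1:ℝ) ≤ (2:ℝ) ^ t *
        ((2:ℝ)⁻¹) ^ ((univ.filter fun j : Fin m => fsupp (vs j) ⊆ S).card) := by
      intro vs hvs
      rw [hBad, Finset.mem_filter] at hvs
      have hX : (((univ.filter fun j : Fin m => fsupp (vs j) ⊆ S).card : ℕ) : ℝ) ≤ t :=
        (not_le.mp hvs.2).le
      set X := ((univ.filter fun j : Fin m => fsupp (vs j) ⊆ S).card : ℕ) with hXdef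
      have h2X : ((2:ℝ)⁻¹) ^ X = (2:ℝ) ^ (-(X:ℝ)) := by
        rw [inv_pow, ← Real.rpow_natCast (2:ℝ) X, ← Real.rpow_neg (by norm_num)]
      rw [h2X, ← Real.rpow_add (by norm_num : (0:ℝ) < 2)]
      calc (1:ℝ) = (2:ℝ) ^ (0:ℝ) := (Real.rpow_zero 2).symm
        _ ≤ (2:ℝ) ^ (t + -(X:ℝ)) :=
          Real.rpow_le_rpow_of_exponent_le (by norm_num) (by linarith)
    have hpos : ∀ vs ∈ Ω, (0:ℝ) ≤ (2:ℝ) ^ t *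
        ((2:ℝ)⁻¹) ^ ((univ.filter fun j : Fin m => fsupp (vs j) ⊆ S).card) := by
      intro vs _
      have := Real.rpow_pos_of_pos (by norm_num : (0:ℝ) < 2) t
      positivity
    calc (Bad.card : ℝ) = ∑ _vs ∈ Bad, (1:ℝ) := by simp
      _ ≤ ∑ vs ∈ Bad, (2:ℝ) ^ t *
          ((2:ℝ)⁻¹) ^ ((univ.filter fun j : Fin m => fsupp (vs j) ⊆ S).card) :=
        Finset.sum_le_sum hterm
      _ ≤ ∑ vs ∈ Ω, (2:ℝ) ^ t *
          ((2:ℝ)⁻¹) ^ ((univ.filter fun j : Fin m => fsupp (vs j) ⊆ S).card) :=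
        Finset.sum_le_sum_of_subset_of_nonneg (Finset.filter_subset _ _)
          (fun vs hvs _ => hpos vs hvs)
      _ = (2:ℝ) ^ t * ∑ vs ∈ Ω,
          ((2:ℝ)⁻¹) ^ ((univ.filter fun j : Fin m => fsupp (vs j) ⊆ S).card) := by
        rw [Finset.mul_sum]
      _ = (2:ℝ) ^ t * (a - g/2) ^ m := by
        rw [Finset.sum_congr rfl fun vs _ => hprodw vs, hsumw]
  -- analytic estimate
  have hag2 : a - g/2 = a * (1 - p/2) := by
    rw [hp_def]
    field_simp
  have hcore : (2:ℝ) ^ t * (1 - p/2) ^ m ≤ 1 / (n:ℝ)^(2*ℓ) := by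
    have h1m : (1 - p/2) ^ m ≤ Real.exp (-(p/2) * m) := by
      calc (1 - p/2)^m ≤ (Real.exp (-(p/2)))^m :=
          pow_le_pow_left₀ (by linarith) (Real.one_sub_le_exp_neg (p/2)) m
        _ = Real.exp (-(p/2) * m) := by
          rw [← Real.exp_nat_mul]
          congr 1
          ring
    have h2t : (2:ℝ) ^ t = Real.exp (Real.log 2 * t) := Real.rpow_def_of_pos (by norm_num) t
    have hη : 1 / (n:ℝ)^(2*ℓ) = Real.exp (-(((2*ℓ:ℕ)):ℝ) * Real.log n) := by
      rw [neg_mul, Real.exp_neg, Real.exp_nat_mul, Real.exp_log hn0, one_div]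
    have hε2 : ε^2 ≤ 1 := by nlinarith
    have hL : (0:ℝ) < (ℓ:ℝ) * Real.log n := by positivity
    have ht8 : 8 * ((ℓ:ℝ) * Real.log n) ≤ t := by
      rw [htdef, le_div_iff₀ (by positivity)]
      nlinarith [mul_le_mul_of_nonneg_left hε2
          (by positivity : (0:ℝ) ≤ 8 * ((ℓ:ℝ) * Real.log n)),
        mul_le_mul_of_nonneg_right hCr hL.le]
    have h2tμ : 2 * t = μ := by rw [htdef, hμdef]; ring
    have hpm2 : 2 * t ≤ p * m := by linarith
    have hlog2 : Real.log 2 ≤ 3/4 := by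
      have := Real.log_two_lt_d9
      linarith
    have ht0 : (0:ℝ) ≤ t := by positivity
    have hexpineq : Real.log 2 * t + -(p/2) * m ≤ -(((2*ℓ:ℕ)):ℝ) * Real.log n := by
      have hmul : Real.log 2 * t ≤ 3/4 * t := mul_le_mul_of_nonneg_right hlog2 ht0
      have hpm : -(p/2) * m = -((p * m)/2) := by ring
      rw [hpm]
      push_cast
      nlinarith
    calc (2:ℝ) ^ t * (1 - p/2) ^ m
        ≤ Real.exp (Real.log 2 * t) * Real.exp (-(p/2) * m) := by
          rw [h2t]
          exact mul_le_mul_of_nonneg_left h1m (Real.exp_pos _).le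
      _ = Real.exp (Real.log 2 * t + -(p/2) * m) := (Real.exp_add _ _).symm
      _ ≤ Real.exp (-(((2*ℓ:ℕ)):ℝ) * Real.log n) := Real.exp_le_exp.mpr hexpineq
      _ = 1 / (n:ℝ)^(2*ℓ) := hη.symm
  have hfin : (2:ℝ) ^ t * (a - g/2) ^ m ≤ 1 / (n:ℝ)^(2*ℓ) * a ^ m := by
    rw [hag2, mul_pow]
    calc (2:ℝ) ^ t * ((a ^ m) * (1 - p/2) ^ m)
        = ((2:ℝ) ^ t * (1 - p/2) ^ m) * a ^ m := by ring
      _ ≤ 1 / (n:ℝ)^(2*ℓ) * a ^ m :=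
        mul_le_mul_of_nonneg_right hcore (by positivity)
  have hΩa : ((Ω.card : ℕ) : ℝ) = a ^ m := by
    rw [cardΩ, ha_def]
    push_cast
    ring
  have hbadfinal : (Bad.card : ℝ) ≤ 1 / (n:ℝ)^(2*ℓ) * (Ω.card : ℝ) := by
    rw [hΩa]
    exact hbadle.trans hfin
  have hcast : (((Ω.filter fun vs =>
      t ≤ ((univ.filter fun j : Fin m => fsupp (vs j) ⊆ S).card : ℝ)).card : ℝ))
      + (Bad.card : ℝ) = (Ω.card : ℝ) := by
    rw [hBad]
    exact_mod_cast hsplit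
  linarith
end

section
/- Let 𝔽 be a finite field, let k ≤ ℓ ≤ n, and let I = (H, (b_v)_{v∈H}) be a k-LIN(𝔽) instance in n variables with H nonempty. For S ⊆ [n] with |S| = ℓ, let H_S = {v ∈ H : supp(v) ⊆ S} and let val(I_S) denote the maximum over z ∈ 𝔽^S of (1/|H_S|)·|{v ∈ H_S : ⟨v,z⟩ = b_v}| when H_S ≠ ∅ (and val(I_S) = 1 when H_S = ∅), where ⟨v,z⟩ = ∑_{i∈S} vᵢ·zᵢ. Then: (a) for every x ∈ 𝔽ⁿ, |H| · C(n−k, ℓ−k) · val(I,x) = ∑_{S⊆[n], |S|=ℓ} |{v ∈ H_S : ⟨v,x⟩ = b_v}|; and (b) val(I) ≤ (1/(|H|·C(n−k, ℓ−k))) · ∑_{S⊆[n], |S|=ℓ} val(I_S) · |H_S|. -/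
open Finset

/-- `val(I_S)` for the subinstance of the constraints supported inside `S`: the maximum
over assignments `z` of the fraction of satisfied constraints of `I_S` (taken to be `1`
if the subinstance is empty).  Since constraints in `I_S` only involve the coordinates in
`S`, the maximum over `z : Fin n → F` of `∑_{i∈S} vᵢzᵢ`-satisfaction coincides with the
maximum over `z ∈ 𝔽^S`. -/
noncomputable def valS (F : Type) [Field F] [Fintype F] [DecidableEq F] {n : ℕ}
    (H : Finset (Fin n → F)) (b : (Fin n → F) → F) (S : Finset (Fin n)) : ℝ :=
  if (H.filter fun v => fsupp v ⊆ S).Nonempty then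
    Finset.univ.sup' Finset.univ_nonempty fun z : Fin n → F =>
      (((H.filter fun v => fsupp v ⊆ S).filter fun v => ∑ i ∈ S, v i * z i = b v).card : ℝ) /
        ((H.filter fun v => fsupp v ⊆ S).card : ℝ)
  else 1

lemma count_supersets {n k ℓ : ℕ} (hkl : k ≤ ℓ) (T : Finset (Fin n)) (hT : T.card = k) :
    ((Finset.powersetCard ℓ (Finset.univ : Finset (Fin n))).filter (fun S => T ⊆ S)).card
      = (n - k).choose (ℓ - k) := by
  have : ((Finset.powersetCard ℓ (Finset.univ : Finset (Fin n))).filter (fun S => T ⊆ S)).card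
      = (Finset.powersetCard (ℓ - k) ((Finset.univ : Finset (Fin n)) \ T)).card := by
    apply Finset.card_bij' (fun S _ => S \ T) (fun U _ => U ∪ T)
    · intro S hS
      simp only [mem_filter, mem_powersetCard] at hS
      simp only [mem_powersetCard]
      refine ⟨sdiff_subset_sdiff (subset_univ S) le_rfl, ?_⟩
      rw [card_sdiff_of_subset hS.2, hS.1.2, hT]
    · intro U hU
      simp only [mem_powersetCard] at hU
      have hd : Disjoint U T := Finset.sdiff_disjoint.mono_left hU.1
      simp only [mem_filter, mem_powersetCard]
      refine ⟨⟨subset_univ _, ?_⟩, subset_union_right⟩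
      rw [Finset.card_union_of_disjoint hd, hU.2, hT, Nat.sub_add_cancel hkl]
    · intro S hS
      simp only [mem_filter] at hS
      exact Finset.sdiff_union_of_subset hS.2
    · intro U hU
      simp only [mem_powersetCard] at hU
      have hd : Disjoint U T := Finset.sdiff_disjoint.mono_left hU.1
      exact Finset.union_sdiff_cancel_right hd
  rw [this, Finset.card_powersetCard, Finset.card_sdiff_of_subset (subset_univ T), hT, card_univ,
    Fintype.card_fin]

lemma parta_nat {F : Type} [Field F] [Fintype F] [DecidableEq F] {n k ℓ : ℕ}
    (hkl : k ≤ ℓ)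
    (H : Finset (Fin n → F)) (hsp : ∀ v ∈ H, (fsupp v).card = k)
    (Q : (Fin n → F) → Prop) [DecidablePred Q] :
    (H.filter Q).card * (n - k).choose (ℓ - k) =
      ∑ S ∈ Finset.powersetCard ℓ (Finset.univ : Finset (Fin n)),
        ((H.filter fun v => fsupp v ⊆ S).filter Q).card := by
  have : ∀ S, ((H.filter fun v => fsupp v ⊆ S).filter Q).card
      = ∑ v ∈ H, if fsupp v ⊆ S ∧ Q v then 1 else 0 := by
    intro S
    rw [Finset.filter_filter, Finset.card_filter]
  simp only [this]
  rw [Finset.sum_comm]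
  have : ∀ v ∈ H, (∑ S ∈ Finset.powersetCard ℓ (Finset.univ : Finset (Fin n)),
      if fsupp v ⊆ S ∧ Q v then 1 else 0)
      = if Q v then (n - k).choose (ℓ - k) else 0 := by
    intro v hv
    by_cases hQ : Q v
    · simp only [hQ, and_true, if_true]
      rw [← Finset.card_filter, count_supersets hkl _ (hsp v hv)]
    · simp [hQ]
  rw [Finset.sum_congr rfl this, ← Finset.sum_filter, Finset.sum_const, smul_eq_mul]

/-- (a) the value of a `k`-LIN(𝔽) instance decomposes over the `ℓ`-subsets
`S ⊆ [n]`, and (b) the average of the local values `val(I_S)` certifies `val(I)`. -/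
theorem stmt17 (F : Type) [Field F] [Fintype F] [DecidableEq F] (n k ℓ : ℕ)
    (hkl : k ≤ ℓ) (hln : ℓ ≤ n)
    (H : Finset (Fin n → F)) (hH : H.Nonempty)
    (hsp : ∀ v ∈ H, (fsupp v).card = k) (b : (Fin n → F) → F) :
    (∀ x : Fin n → F,
        (H.card : ℝ) * ((n - k).choose (ℓ - k) : ℝ) *
            (((H.filter fun v => ∑ i, v i * x i = b v).card : ℝ) / (H.card : ℝ)) =
          ∑ S ∈ Finset.powersetCard ℓ (Finset.univ : Finset (Fin n)),
            (((H.filter fun v => fsupp v ⊆ S).filter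
              fun v => ∑ i, v i * x i = b v).card : ℝ)) ∧
      ∀ x : Fin n → F,
        ((H.filter fun v => ∑ i, v i * x i = b v).card : ℝ) / (H.card : ℝ) ≤
          (1 / ((H.card : ℝ) * ((n - k).choose (ℓ - k) : ℝ))) *
            ∑ S ∈ Finset.powersetCard ℓ (Finset.univ : Finset (Fin n)),
              valS F H b S * ((H.filter fun v => fsupp v ⊆ S).card : ℝ) := by
  have hHc : (0 : ℝ) < (H.card : ℝ) := by exact_mod_cast Finset.card_pos.mpr hH
  have hCc : (0 : ℝ) < (((n - k).choose (ℓ - k)) : ℝ) := by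
    exact_mod_cast Nat.choose_pos (Nat.sub_le_sub_right hln k)
  have hA : ∀ x : Fin n → F,
      (H.card : ℝ) * ((n - k).choose (ℓ - k) : ℝ) *
          (((H.filter fun v => ∑ i, v i * x i = b v).card : ℝ) / (H.card : ℝ)) =
        ∑ S ∈ Finset.powersetCard ℓ (Finset.univ : Finset (Fin n)),
          (((H.filter fun v => fsupp v ⊆ S).filter
            fun v => ∑ i, v i * x i = b v).card : ℝ) := by
    intro x
    have hn := parta_nat (F := F) hkl H hsp (fun v => ∑ i, v i * x i = b v)
    have : ((H.filter fun v => ∑ i, v i * x i = b v).card : ℝ) *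
        ((n - k).choose (ℓ - k) : ℝ) =
        ∑ S ∈ Finset.powersetCard ℓ (Finset.univ : Finset (Fin n)),
          (((H.filter fun v => fsupp v ⊆ S).filter
            fun v => ∑ i, v i * x i = b v).card : ℝ) := by
      exact_mod_cast congrArg (Nat.cast : ℕ → ℝ) hn
    rw [← this]
    field_simp
  refine ⟨hA, ?_⟩
  intro x
  -- per-S bound
  have hS : ∀ S ∈ Finset.powersetCard ℓ (Finset.univ : Finset (Fin n)),
      (((H.filter fun v => fsupp v ⊆ S).filter fun v => ∑ i, v i * x i = b v).card : ℝ) ≤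
        valS F H b S * ((H.filter fun v => fsupp v ⊆ S).card : ℝ) := by
    intro S _
    by_cases hne : (H.filter fun v => fsupp v ⊆ S).Nonempty
    · have hpos : (0 : ℝ) < ((H.filter fun v => fsupp v ⊆ S).card : ℝ) := by
        exact_mod_cast Finset.card_pos.mpr hne
      have heq : ((H.filter fun v => fsupp v ⊆ S).filter fun v => ∑ i, v i * x i = b v) =
          ((H.filter fun v => fsupp v ⊆ S).filter fun v => ∑ i ∈ S, v i * x i = b v) := by
        apply Finset.filter_congr
        intro v hv
        have hsub : fsupp v ⊆ S := (Finset.mem_filter.mp hv).2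
        have : ∑ i ∈ S, v i * x i = ∑ i, v i * x i := by
          apply Finset.sum_subset (Finset.subset_univ S)
          intro i _ hiS
          have : v i = 0 := by
            by_contra h
            exact hiS (hsub (by simp [fsupp, h]))
          simp [this]
        simp [this]
      rw [heq]
      have hle : (((H.filter fun v => fsupp v ⊆ S).filter
            fun v => ∑ i ∈ S, v i * x i = b v).card : ℝ) /
            ((H.filter fun v => fsupp v ⊆ S).card : ℝ) ≤ valS F H b S := by
        rw [valS, if_pos hne]
        exact Finset.le_sup' (f := fun z : Fin n → F =>
          (((H.filter fun v => fsupp v ⊆ S).filter fun v => ∑ i ∈ S, v i * z i = b v).card : ℝ) /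
            ((H.filter fun v => fsupp v ⊆ S).card : ℝ)) (Finset.mem_univ x)
      calc (((H.filter fun v => fsupp v ⊆ S).filter
            fun v => ∑ i ∈ S, v i * x i = b v).card : ℝ)
          = (((H.filter fun v => fsupp v ⊆ S).filter
            fun v => ∑ i ∈ S, v i * x i = b v).card : ℝ) /
            ((H.filter fun v => fsupp v ⊆ S).card : ℝ) *
            ((H.filter fun v => fsupp v ⊆ S).card : ℝ) := by field_simp
        _ ≤ valS F H b S * ((H.filter fun v => fsupp v ⊆ S).card : ℝ) := by
            exact mul_le_mul_of_nonneg_right hle hpos.le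
    · rw [Finset.not_nonempty_iff_eq_empty] at hne
      simp [hne, valS]
  have hsum := Finset.sum_le_sum hS
  rw [← hA x] at hsum
  have hpos : (0:ℝ) < (H.card : ℝ) * ((n - k).choose (ℓ - k) : ℝ) := mul_pos hHc hCc
  calc ((H.filter fun v => ∑ i, v i * x i = b v).card : ℝ) / (H.card : ℝ)
      = (1 / ((H.card : ℝ) * ((n - k).choose (ℓ - k) : ℝ))) *
        ((H.card : ℝ) * ((n - k).choose (ℓ - k) : ℝ) *
          (((H.filter fun v => ∑ i, v i * x i = b v).card : ℝ) / (H.card : ℝ))) := by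
        field_simp
    _ ≤ _ := by
        apply mul_le_mul_of_nonneg_left hsum (by positivity)
end
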